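/- arXiv:2211.12441 — 14 statements merged into one kernel-verified Lean document; each statement's English description precedes it below -/
import Mathlib

section
/- Let (X, ≺) be a finite strict partial order with |X| = n ≥ 1 and let d ∈ {0, …, n−1}. Then the number of linear extensions ρ of ≺ such that exactly d of the ranks r ∈ {2, …, n} satisfy ρ⁻¹(r−1) ≺ ρ⁻¹(r) is at most n!/(d+1)!. -/
open Finset

namespace Stmt0Aux

variable {X : Type*} [Fintype X] [DecidableEq X] {n : ℕ}
variable (lt : X → X → Prop) [DecidableRel lt]

/-- `p` is an "E-position" for `ρ`: either rank `0` or the top of an ascent. -/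
def Epos (ρ : X ≃ Fin n) (p : Fin n) : Prop :=
  (p : ℕ) = 0 ∨ ∃ p' : Fin n, (p : ℕ) = (p' : ℕ) + 1 ∧ lt (ρ.symm p') (ρ.symm p)

instance (ρ : X ≃ Fin n) : DecidablePred (Epos lt ρ) := fun _ => by
  unfold Epos; infer_instance

/-- The non-E positions. -/
def Npos (ρ : X ≃ Fin n) : Finset (Fin n) :=
  univ.filter (fun p => ¬ Epos lt ρ p)

lemma card_Epos (hn : 0 < n) (ρ : X ≃ Fin n) {d : ℕ}
    (hd : (univ.filter (fun p : Fin n × Fin n =>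
      (p.2 : ℕ) = (p.1 : ℕ) + 1 ∧ lt (ρ.symm p.1) (ρ.symm p.2))).card = d) :
    (univ.filter (Epos lt ρ)).card = d + 1 := by
  set A : Finset (Fin n × Fin n) := univ.filter (fun p : Fin n × Fin n =>
      (p.2 : ℕ) = (p.1 : ℕ) + 1 ∧ lt (ρ.symm p.1) (ρ.symm p.2)) with hA
  have himg : univ.filter (Epos lt ρ) = insert (⟨0, hn⟩ : Fin n) (A.image Prod.snd) := by
    ext p
    simp only [mem_filter, mem_univ, true_and, mem_insert, mem_image, hA]
    constructor
    · rintro (h0 | ⟨p', h1, h2⟩)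
      · left; exact Fin.ext h0
      · right; exact ⟨(p', p), by simp [h1, h2], rfl⟩
    · rintro (h | ⟨a, ha, rfl⟩)
      · left; rw [h]
      · exact Or.inr ⟨a.1, ha.1, ha.2⟩
  have hnotmem : (⟨0, hn⟩ : Fin n) ∉ A.image Prod.snd := by
    intro h
    rcases mem_image.1 h with ⟨a, ha, h2⟩
    rcases (mem_filter.1 ha).2 with ⟨h1, _⟩
    rw [h2] at h1
    simp at h1
  have hinj : Set.InjOn Prod.snd (A : Set (Fin n × Fin n)) := by
    intro a ha b hb hab
    have ha' := (mem_filter.1 ha).2.1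
    have hb' := (mem_filter.1 hb).2.1
    have : (a.1 : ℕ) = (b.1 : ℕ) := by
      have : ((a.2 : Fin n) : ℕ) = ((b.2 : Fin n) : ℕ) := by rw [hab]
      omega
    exact Prod.ext (Fin.ext this) hab
  rw [himg, card_insert_of_notMem hnotmem, Finset.card_image_of_injOn hinj, hd]

lemma card_Npos (hn : 0 < n) (ρ : X ≃ Fin n) {d : ℕ}
    (hd : (univ.filter (fun p : Fin n × Fin n =>
      (p.2 : ℕ) = (p.1 : ℕ) + 1 ∧ lt (ρ.symm p.1) (ρ.symm p.2))).card = d) :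
    (Npos lt ρ).card = n - (d + 1) := by
  have h := Finset.card_filter_add_card_filter_not
    (s := (univ : Finset (Fin n))) (p := Epos lt ρ)
  rw [card_Epos lt hn ρ hd] at h
  have : (univ : Finset (Fin n)).card = n := by simp
  unfold Npos
  omega

/-- Key contradiction lemma: if `ρ, ρ'` agree below rank `q`, disagree at `q`, and the
element `u = ρ.symm q` sits at an E-position of `ρ'`, we get a contradiction. -/
lemma epos_aux (ρ ρ' : X ≃ Fin n) (hρ : ∀ x y, lt x y → ρ x < ρ y)
    (q : Fin n) (pre : ∀ p : Fin n, p < q → ρ.symm p = ρ'.symm p)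
    (hne : ρ.symm q ≠ ρ'.symm q) (hE : Epos lt ρ' (ρ' (ρ.symm q))) : False := by
  set u := ρ.symm q with hu
  set q' := ρ' u with hq'def
  have hρu : ρ u = q := ρ.apply_symm_apply q
  have hq'u : ρ'.symm q' = u := ρ'.symm_apply_apply u
  have hqq' : q < q' := by
    rcases lt_trichotomy q' q with h | h | h
    · have h1 := pre q' h
      have h2 : ρ.symm q' = ρ.symm q := by rw [h1, hq'u]
      exact absurd (ρ.symm.injective h2) (ne_of_lt h)
    · exact absurd (by rw [← h]; exact hq'u.symm) hne
    · exact h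
  rcases hE with h0 | ⟨p', hp1, hp2⟩
  · have := Fin.lt_def.1 hqq'
    omega
  · rw [hq'u] at hp2
    set w := ρ'.symm p' with hw
    have h5 : ρ w < ρ u := hρ _ _ hp2
    rw [hρu] at h5
    have h6 := pre (ρ w) h5
    rw [ρ.symm_apply_apply] at h6
    have h7 : ρ' w = ρ w := by
      conv_lhs => rw [h6]
      exact ρ'.apply_symm_apply _
    have h8 : ρ' w = p' := by rw [hw]; exact ρ'.apply_symm_apply p'
    have hv1 := Fin.lt_def.1 h5
    have hv2 := Fin.lt_def.1 hqq'
    have : (p' : ℕ) = ((ρ w : Fin n) : ℕ) := by rw [← h8, h7]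
    omega

lemma index_eq {m : ℕ} {s t : Finset (Fin n)} (hs : s.card = m) (ht : t.card = m) {q : Fin n}
    (hst : ∀ p : Fin n, p < q → (p ∈ s ↔ p ∈ t)) {i j : Fin m}
    (hi : s.orderEmbOfFin hs i = q) (hj : t.orderEmbOfFin ht j = q) : i = j := by
  have key : ∀ (u : Finset (Fin n)) (hu : u.card = m) (k : Fin m),
      u.orderEmbOfFin hu k = q →
      (Finset.Iio k).image (u.orderEmbOfFin hu) = u.filter (· < q) := by
    intro u hu k hk
    ext x
    simp only [mem_image, mem_Iio, mem_filter]
    constructor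
    · rintro ⟨a, ha, rfl⟩
      exact ⟨Finset.orderEmbOfFin_mem u hu a, by
        rw [← hk]; exact (u.orderEmbOfFin hu).strictMono ha⟩
    · rintro ⟨hxs, hxq⟩
      have : x ∈ Set.range (u.orderEmbOfFin hu) := by
        rw [Finset.range_orderEmbOfFin]; exact hxs
      rcases this with ⟨a, rfl⟩
      refine ⟨a, ?_, rfl⟩
      rw [← hk] at hxq
      exact (u.orderEmbOfFin hu).strictMono.lt_iff_lt.1 hxq
  have h1 := key s hs i hi
  have h2 := key t ht j hj
  have h3 : s.filter (· < q) = t.filter (· < q) := by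
    ext p
    simp only [mem_filter]
    constructor
    · rintro ⟨hp, hpq⟩; exact ⟨(hst p hpq).1 hp, hpq⟩
    · rintro ⟨hp, hpq⟩; exact ⟨(hst p hpq).2 hp, hpq⟩
  have c1 : ((Finset.Iio i).image (s.orderEmbOfFin hs)).card = (i : ℕ) := by
    rw [Finset.card_image_of_injective _ (s.orderEmbOfFin hs).injective, Fin.card_Iio]
  have c2 : ((Finset.Iio j).image (t.orderEmbOfFin ht)).card = (j : ℕ) := by
    rw [Finset.card_image_of_injective _ (t.orderEmbOfFin ht).injective, Fin.card_Iio]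
  apply Fin.ext
  rw [← c1, ← c2, h1, h2, h3]

lemma symm_eq (ρ ρ' : X ≃ Fin n)
    (hρ : ∀ x y, lt x y → ρ x < ρ y) (hρ' : ∀ x y, lt x y → ρ' x < ρ' y)
    {m : ℕ} (hm : (Npos lt ρ).card = m) (hm' : (Npos lt ρ').card = m)
    (hfun : ∀ i : Fin m,
      ρ.symm ((Npos lt ρ).orderEmbOfFin hm i) = ρ'.symm ((Npos lt ρ').orderEmbOfFin hm' i)) :
    ρ = ρ' := by
  -- image equality
  have himg : (Npos lt ρ).image ρ.symm = (Npos lt ρ').image ρ'.symm := by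
    ext u
    constructor
    · intro h
      rcases mem_image.1 h with ⟨p, hp, rfl⟩
      have : p ∈ Set.range ((Npos lt ρ).orderEmbOfFin hm) := by
        rw [Finset.range_orderEmbOfFin]; exact hp
      rcases this with ⟨i, rfl⟩
      rw [hfun i]
      exact mem_image.2 ⟨_, Finset.orderEmbOfFin_mem _ hm' i, rfl⟩
    · intro h
      rcases mem_image.1 h with ⟨p, hp, rfl⟩
      have : p ∈ Set.range ((Npos lt ρ').orderEmbOfFin hm') := by
        rw [Finset.range_orderEmbOfFin]; exact hp
      rcases this with ⟨i, rfl⟩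
      rw [← hfun i]
      exact mem_image.2 ⟨_, Finset.orderEmbOfFin_mem _ hm i, rfl⟩
  have key : ∀ k : ℕ, ∀ hk : k < n, ρ.symm ⟨k, hk⟩ = ρ'.symm ⟨k, hk⟩ := by
    intro k
    induction k using Nat.strong_induction_on with
    | _ k IH =>
      intro hk
      set q : Fin n := ⟨k, hk⟩ with hqdef
      have pre : ∀ p : Fin n, p < q → ρ.symm p = ρ'.symm p := by
        intro p hp
        have hpk : (p : ℕ) < k := hp
        have := IH (p : ℕ) hpk p.isLt
        simpa using this
      by_cases hq : Epos lt ρ q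
      · by_contra hne
        have hu : ρ.symm q ∉ (Npos lt ρ).image ρ.symm := by
          intro h
          rcases mem_image.1 h with ⟨p, hp, hpe⟩
          have : p = q := ρ.symm.injective hpe
          subst this
          exact (mem_filter.1 hp).2 hq
        rw [himg] at hu
        have hE : Epos lt ρ' (ρ' (ρ.symm q)) := by
          by_contra hE
          exact hu (mem_image.2 ⟨ρ' (ρ.symm q),
            mem_filter.2 ⟨mem_univ _, hE⟩, ρ'.symm_apply_apply _⟩)
        exact epos_aux lt ρ ρ' hρ q pre hne hE
      · by_cases hq' : Epos lt ρ' q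
        · by_contra hne
          have pre' : ∀ p : Fin n, p < q → ρ'.symm p = ρ.symm p := fun p hp => (pre p hp).symm
          have hu : ρ'.symm q ∉ (Npos lt ρ').image ρ'.symm := by
            intro h
            rcases mem_image.1 h with ⟨p, hp, hpe⟩
            have : p = q := ρ'.symm.injective hpe
            subst this
            exact (mem_filter.1 hp).2 hq'
          rw [← himg] at hu
          have hE : Epos lt ρ (ρ (ρ'.symm q)) := by
            by_contra hE
            exact hu (mem_image.2 ⟨ρ (ρ'.symm q),
              mem_filter.2 ⟨mem_univ _, hE⟩, ρ.symm_apply_apply _⟩)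
          exact epos_aux lt ρ' ρ hρ' q pre' (Ne.symm hne) hE
        · -- both non-E
          have hqN : q ∈ Npos lt ρ := mem_filter.2 ⟨mem_univ _, hq⟩
          have hqN' : q ∈ Npos lt ρ' := mem_filter.2 ⟨mem_univ _, hq'⟩
          have : q ∈ Set.range ((Npos lt ρ).orderEmbOfFin hm) := by
            rw [Finset.range_orderEmbOfFin]; exact hqN
          rcases this with ⟨i, hi⟩
          have : q ∈ Set.range ((Npos lt ρ').orderEmbOfFin hm') := by
            rw [Finset.range_orderEmbOfFin]; exact hqN'
          rcases this with ⟨j, hj⟩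
          have hst : ∀ p : Fin n, p < q → (p ∈ Npos lt ρ ↔ p ∈ Npos lt ρ') := by
            intro p hp
            simp only [Npos, mem_filter, mem_univ, true_and]
            have hEiff : Epos lt ρ p ↔ Epos lt ρ' p := by
              unfold Epos
              have e1 : ρ.symm p = ρ'.symm p := pre p hp
              constructor
              · rintro (h0 | ⟨p', h1, h2⟩)
                · exact Or.inl h0
                · refine Or.inr ⟨p', h1, ?_⟩
                  have hp'p : p' < p := Fin.lt_def.2 (by omega)
                  rw [← pre p' (lt_trans hp'p hp), ← e1]
                  exact h2
              · rintro (h0 | ⟨p', h1, h2⟩)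
                · exact Or.inl h0
                · refine Or.inr ⟨p', h1, ?_⟩
                  have hp'p : p' < p := Fin.lt_def.2 (by omega)
                  rw [pre p' (lt_trans hp'p hp), e1]
                  exact h2
            exact not_congr hEiff
          have hij : i = j := index_eq hm hm' hst hi hj
          calc ρ.symm q = ρ.symm ((Npos lt ρ).orderEmbOfFin hm i) := by rw [hi]
            _ = ρ'.symm ((Npos lt ρ').orderEmbOfFin hm' i) := hfun i
            _ = ρ'.symm q := by rw [hij, hj]
  have hs : ρ.symm = ρ'.symm := Equiv.ext (fun q => by simpa using key q.val q.isLt)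
  rw [← ρ.symm_symm, ← ρ'.symm_symm, hs]

end Stmt0Aux

open Stmt0Aux in
/-- **Claim (encoding bound).** Let `(X, ≺)` be a finite strict partial order with `|X| = n ≥ 1`
and let `d ∈ {0, …, n−1}`. The number of linear extensions `ρ : X ≃ Fin n` of `≺` such that
exactly `d` of the ranks `r ∈ {2, …, n}` satisfy `ρ⁻¹(r−1) ≺ ρ⁻¹(r)` (encoded as pairs of
consecutive ranks) is at most `n! / (d+1)!`. -/
theorem stmt0 (X : Type*) [Fintype X] [DecidableEq X] (n : ℕ) (hn : 1 ≤ n)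
    (hcard : Fintype.card X = n)
    (lt : X → X → Prop) [DecidableRel lt]
    (hirr : ∀ x, ¬ lt x x) (htrans : ∀ x y z, lt x y → lt y z → lt x z)
    (d : ℕ) (hd : d ≤ n - 1) :
    ((Finset.univ.filter (fun ρ : X ≃ Fin n =>
        (∀ x y, lt x y → ρ x < ρ y) ∧
        (Finset.univ.filter (fun p : Fin n × Fin n =>
          (p.2 : ℕ) = (p.1 : ℕ) + 1 ∧ lt (ρ.symm p.1) (ρ.symm p.2))).card = d)).card : ℚ)
      ≤ (n.factorial : ℚ) / ((d + 1).factorial : ℚ) := by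
  classical
  have hd1n : d + 1 ≤ n := by omega
  set m : ℕ := n - (d + 1) with hmdef
  set F := (Finset.univ.filter (fun ρ : X ≃ Fin n =>
        (∀ x y, lt x y → ρ x < ρ y) ∧
        (Finset.univ.filter (fun p : Fin n × Fin n =>
          (p.2 : ℕ) = (p.1 : ℕ) + 1 ∧ lt (ρ.symm p.1) (ρ.symm p.2))).card = d)) with hF
  have hmn : m ≤ n := by omega
  have hXn : Nonempty (Fin m ↪ X) := by
    exact ⟨(Fin.castLEEmb hmn).trans (Fintype.equivFinOfCardEq hcard).symm.toEmbedding⟩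
  let junk : Fin m ↪ X := Classical.choice hXn
  let f : (X ≃ Fin n) → (Fin m ↪ X) := fun ρ =>
    if h : (Npos lt ρ).card = m then
      ((Npos lt ρ).orderEmbOfFin h).toEmbedding.trans ρ.symm.toEmbedding
    else junk
  have hcardle : F.card ≤ (Finset.univ : Finset (Fin m ↪ X)).card := by
    apply Finset.card_le_card_of_injOn f (fun _ _ => Finset.mem_univ _)
    intro ρ hρ ρ' hρ' hff
    have hρF := (Finset.mem_filter.1 hρ).2
    have hρ'F := (Finset.mem_filter.1 hρ').2
    have hNρ : (Npos lt ρ).card = m := by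
      rw [card_Npos lt (by omega) ρ hρF.2]
    have hNρ' : (Npos lt ρ').card = m := by
      rw [card_Npos lt (by omega) ρ' hρ'F.2]
    simp only [f, dif_pos hNρ, dif_pos hNρ'] at hff
    have hfun : ∀ i : Fin m,
        ρ.symm ((Npos lt ρ).orderEmbOfFin hNρ i) = ρ'.symm ((Npos lt ρ').orderEmbOfFin hNρ' i) := by
      intro i
      have := congrArg (fun (e : Fin m ↪ X) => e i) hff
      simpa using this
    exact symm_eq lt ρ ρ' hρF.1 hρ'F.1 hNρ hNρ' hfun
  have hcount : (Finset.univ : Finset (Fin m ↪ X)).card = n.descFactorial m := by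
    rw [Finset.card_univ, Fintype.card_embedding_eq, hcard, Fintype.card_fin]
  have hkey : (d + 1).factorial * n.descFactorial m = n.factorial := by
    have h := Nat.factorial_mul_descFactorial (n := n) (k := m) hmn
    rwa [show n - m = d + 1 by omega] at h
  have hfin : (F.card : ℚ) ≤ (n.descFactorial m : ℚ) := by
    exact_mod_cast hcount ▸ hcardle
  have hfacpos : (0 : ℚ) < ((d + 1).factorial : ℚ) := by
    exact_mod_cast Nat.factorial_pos (d + 1)
  have heq : (n.descFactorial m : ℚ) = (n.factorial : ℚ) / ((d + 1).factorial : ℚ) := by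
    rw [eq_div_iff (ne_of_gt hfacpos)]
    exact_mod_cast (mul_comm ((d+1).factorial) (n.descFactorial m) ▸ hkey)
  calc (F.card : ℚ) ≤ (n.descFactorial m : ℚ) := hfin
    _ = _ := heq
end

section
/- Let (X, ≺) be a finite strict partial order with |X| = n. Any two linear extensions ρ₁ and ρ₂ of ≺ can be joined by a finite sequence of linear extensions of ≺ starting at ρ₁ and ending at ρ₂ in which each consecutive pair differs by an adjacent-rank transposition, i.e., each next ranking is obtained from the previous one by composing it with the transposition of the two ranks r and r+1 for some r ∈ {1, …, n−1}. -/
lemma swap_adj_lt {n : ℕ} (a b p q : Fin n) (hb : (b:ℕ) = (a:ℕ) + 1)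
    (hpq : p < q) (hne : ¬(p = a ∧ q = b)) :
    Equiv.swap a b p < Equiv.swap a b q := by
  simp only [Equiv.swap_apply_def, Fin.lt_def, Fin.ext_iff] at *
  split_ifs <;> omega

lemma equiv_strictMono_eq {n : ℕ} (f : Fin n ≃ Fin n) (hf : StrictMono (f : Fin n → Fin n)) :
    ∀ i, f i = i := by
  haveI hwf : WellFoundedLT (Fin n) := inferInstance
  have hsymm : StrictMono (f.symm : Fin n → Fin n) := by
    intro i j hij
    have := (hf.lt_iff_lt (a := f.symm i) (b := f.symm j)).mp
    simp only [Equiv.apply_symm_apply] at this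
    exact this hij
  intro i
  refine le_antisymm ?_ (@StrictMono.le_apply (Fin n) _ hwf _ hf i)
  have := @StrictMono.le_apply (Fin n) _ hwf _ hsymm (f i)
  simpa using this

/-- **Connectivity of linear extensions.** Let `(X, ≺)` be a finite strict partial order with
`|X| = n`. Any two linear extensions `ρ₁, ρ₂ : X ≃ Fin n` of `≺` can be joined by a finite
sequence of linear extensions of `≺` in which each consecutive pair differs by an adjacent-rank
transposition: the next ranking is obtained from the previous one by composing with the
transposition of two consecutive ranks `a` and `a+1`. -/
theorem stmt1 (X : Type*) [Fintype X] (n : ℕ) (hcard : Fintype.card X = n)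
    (lt : X → X → Prop)
    (hirr : ∀ x, ¬ lt x x) (htrans : ∀ x y z, lt x y → lt y z → lt x z)
    (ρ₁ ρ₂ : X ≃ Fin n)
    (h₁ : ∀ x y, lt x y → ρ₁ x < ρ₁ y) (h₂ : ∀ x y, lt x y → ρ₂ x < ρ₂ y) :
    Relation.ReflTransGen
      (fun ρ ρ' : X ≃ Fin n =>
        (∀ x y, lt x y → ρ x < ρ y) ∧ (∀ x y, lt x y → ρ' x < ρ' y) ∧
        ∃ a b : Fin n, (b : ℕ) = (a : ℕ) + 1 ∧ ρ' = ρ.trans (Equiv.swap a b))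
      ρ₁ ρ₂ := by
  classical
  set R : (X ≃ Fin n) → (X ≃ Fin n) → Prop := fun ρ ρ' =>
    (∀ x y, lt x y → ρ x < ρ y) ∧ (∀ x y, lt x y → ρ' x < ρ' y) ∧
    ∃ a b : Fin n, (b : ℕ) = (a : ℕ) + 1 ∧ ρ' = ρ.trans (Equiv.swap a b) with hR
  -- inversion count
  set N : (X ≃ Fin n) → ℕ := fun ρ =>
    ((Finset.univ : Finset (X × X)).filter
      (fun p => ρ p.1 < ρ p.2 ∧ ρ₂ p.2 < ρ₂ p.1)).card with hN
  suffices H : ∀ m (ρ : X ≃ Fin n), (∀ x y, lt x y → ρ x < ρ y) → N ρ ≤ m →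
      Relation.ReflTransGen R ρ ρ₂ from H (N ρ₁) ρ₁ h₁ le_rfl
  intro m
  induction m with
  | zero =>
    intro ρ hρ hm
    -- no inversions at all, in particular no adjacent inversion
    have hinv : ∀ x y : X, ρ x < ρ y → ρ₂ x < ρ₂ y := by
      intro x y hxy
      have : (x, y) ∉ (Finset.univ : Finset (X × X)).filter
          (fun p => ρ p.1 < ρ p.2 ∧ ρ₂ p.2 < ρ₂ p.1) := by
        have : N ρ = 0 := Nat.le_zero.mp hm
        rw [hN] at this
        simp [Finset.card_eq_zero.mp this]
      simp only [Finset.mem_filter, Finset.mem_univ, true_and, not_and, not_lt] at this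
      have hne : ρ₂ x ≠ ρ₂ y := fun h => by
        have : x = y := ρ₂.injective h
        subst this; exact lt_irrefl _ hxy
      exact lt_of_le_of_ne (this hxy) hne
    have hmono : StrictMono ((ρ.symm.trans ρ₂ : Fin n ≃ Fin n) : Fin n → Fin n) := by
      intro i j hij
      apply hinv
      simpa using hij
    have : ρ = ρ₂ := by
      ext x
      have h' : ρ₂ x = ρ x := by simpa using equiv_strictMono_eq _ hmono (ρ x)
      exact congrArg _ h'.symm
    rw [this]
  | succ m ih =>
    intro ρ hρ hm
    by_cases heq : ∀ i j : Fin n, (j : ℕ) = (i : ℕ) + 1 → ρ₂ (ρ.symm i) < ρ₂ (ρ.symm j)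
    · -- ρ₂ ∘ ρ.symm is strictly monotone, hence ρ = ρ₂
      have hmono : StrictMono ((ρ.symm.trans ρ₂ : Fin n ≃ Fin n) : Fin n → Fin n) := by
        have hadj : ∀ i j : Fin n, (j : ℕ) = (i : ℕ) + 1 →
            (ρ.symm.trans ρ₂) i < (ρ.symm.trans ρ₂) j := by
          intro i j hij; exact heq i j hij
        intro i j hij
        -- chain adjacent steps
        obtain ⟨k, hk⟩ : ∃ k : ℕ, (j : ℕ) = (i : ℕ) + (k + 1) := by
          refine ⟨(j : ℕ) - (i : ℕ) - 1, ?_⟩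
          have := (Fin.lt_def).mp hij
          omega
        induction k generalizing j with
        | zero => exact hadj i j (by omega)
        | succ k ihk =>
          have hjn : (i : ℕ) + (k + 1) < n := by have := j.isLt; omega
          set j' : Fin n := ⟨(i:ℕ) + (k+1), hjn⟩ with hj'
          have hij' : i < j' := Fin.lt_def.mpr (by simp [hj'])
          have hkk : (j' : ℕ) = (i : ℕ) + (k + 1) := rfl
          have h1 : (ρ.symm.trans ρ₂) i < (ρ.symm.trans ρ₂) j' := ihk (j := j') hij' hkk
          exact h1.trans (hadj j' j (by simp [hj']; omega))
      have : ρ = ρ₂ := by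
        ext x
        have h' : ρ₂ x = ρ x := by simpa using equiv_strictMono_eq _ hmono (ρ x)
        exact congrArg _ h'.symm
      rw [this]
    · push_neg at heq
      obtain ⟨a, b, hab, hba⟩ := heq
      have hba' : ρ₂ (ρ.symm b) < ρ₂ (ρ.symm a) := by
        rcases lt_or_eq_of_le hba with h | h
        · exact h
        · exfalso
          have : ρ.symm a = ρ.symm b := ρ₂.injective h.symm
          have : a = b := ρ.symm.injective this
          rw [this] at hab; omega
      set u := ρ.symm a with hu
      set v := ρ.symm b with hv
      set ρ' : X ≃ Fin n := ρ.trans (Equiv.swap a b) with hρ'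
      have hρu : ρ u = a := ρ.apply_symm_apply a
      have hρv : ρ v = b := ρ.apply_symm_apply b
      have huv : u ≠ v := by
        intro h
        have : a = b := by rw [← hρu, ← hρv, h]
        rw [this] at hab; omega
      -- ρ' is a linear extension
      have hρ'ext : ∀ x y, lt x y → ρ' x < ρ' y := by
        intro x y hxy
        have hxy' : ρ x < ρ y := hρ x y hxy
        by_cases hc : ρ x = a ∧ ρ y = b
        · exfalso
          have hxu : x = u := ρ.injective (by rw [hρu, hc.1])
          have hyv : y = v := ρ.injective (by rw [hρv, hc.2])
          subst hxu; subst hyv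
          exact absurd (h₂ u v hxy) (not_lt.mpr hba'.le)
        · exact swap_adj_lt a b (ρ x) (ρ y) hab hxy' hc
      -- N decreases
      have hNsub : (Finset.univ : Finset (X × X)).filter
            (fun p => ρ' p.1 < ρ' p.2 ∧ ρ₂ p.2 < ρ₂ p.1) ⊂
          (Finset.univ : Finset (X × X)).filter
            (fun p => ρ p.1 < ρ p.2 ∧ ρ₂ p.2 < ρ₂ p.1) := by
        constructor
        · intro p hp
          simp only [Finset.mem_filter, Finset.mem_univ, true_and] at hp ⊢
          obtain ⟨hp1, hp2⟩ := hp
          refine ⟨?_, hp2⟩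
          by_contra hnlt
          have hne : p.1 ≠ p.2 := by
            intro h; rw [h] at hp2; exact lt_irrefl _ hp2
          have hlt : ρ p.2 < ρ p.1 := by
            rcases lt_trichotomy (ρ p.1) (ρ p.2) with h | h | h
            · exact absurd h hnlt
            · exact absurd (ρ.injective h) hne
            · exact h
          by_cases hc : ρ p.2 = a ∧ ρ p.1 = b
          · have h2u : p.2 = u := ρ.injective (by rw [hρu, hc.1])
            have h1v : p.1 = v := ρ.injective (by rw [hρv, hc.2])
            rw [h2u, h1v] at hp2
            exact absurd hp2 (not_lt.mpr hba'.le)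
          · exact absurd hp1 (not_lt.mpr (swap_adj_lt a b (ρ p.2) (ρ p.1) hab hlt hc).le)
        · intro hsub
          have hmem : (u, v) ∈ (Finset.univ : Finset (X × X)).filter
              (fun p => ρ p.1 < ρ p.2 ∧ ρ₂ p.2 < ρ₂ p.1) := by
            simp only [Finset.mem_filter, Finset.mem_univ, true_and]
            exact ⟨by rw [hρu, hρv]; exact Fin.lt_def.mpr (by omega), hba'⟩
          have := hsub hmem
          simp only [Finset.mem_filter, Finset.mem_univ, true_and] at this
          have h1 : ρ' u = b := by simp [hρ', hρu]
          have h2 : ρ' v = a := by simp [hρ', hρv]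
          rw [h1, h2] at this
          exact absurd this.1 (not_lt.mpr (Fin.le_def.mpr (by omega)))
      have hNlt : N ρ' < N ρ := Finset.card_lt_card hNsub
      have hstep : R ρ ρ' := ⟨hρ, hρ'ext, a, b, hab, rfl⟩
      exact Relation.ReflTransGen.head hstep (ih ρ' hρ'ext (by omega))
end

section
/- For all positive integers k and b with k ≤ b and every real x with 0 < x ≤ π/(b+k), one has (k/(b+k)) · sin((b+k)x)/sin(kx) ≤ 1 − b²x²/(2π²). -/
open Real

lemma aux_mul_cos_le_sin {t : ℝ} (h0 : 0 ≤ t) (h1 : t ≤ Real.pi) :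
    t * Real.cos t ≤ Real.sin t := by
  rcases le_or_gt t (Real.pi / 2) with h | h
  · rcases eq_or_lt_of_le h0 with rfl | ht0
    · simp
    rcases eq_or_lt_of_le h with rfl | ht
    · simp [Real.cos_pi_div_two]
    have hc : 0 < Real.cos t := Real.cos_pos_of_mem_Ioo ⟨by linarith [Real.pi_pos], ht⟩
    have := Real.lt_tan ht0 ht
    rw [Real.tan_eq_sin_div_cos] at this
    rw [lt_div_iff₀ hc] at this
    linarith
  · have hc : Real.cos t ≤ 0 := Real.cos_nonpos_of_pi_div_two_le_of_le h.le (by linarith)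
    have hs : 0 ≤ Real.sin t := Real.sin_nonneg_of_nonneg_of_le_pi h0 h1
    nlinarith

lemma aux_sin_le {v : ℝ} (h0 : 0 ≤ v) (h1 : v ≤ Real.pi) :
    Real.sin v ≤ v * (1 - v ^ 2 / (2 * Real.pi ^ 2)) := by
  have hpi := Real.pi_pos
  have hs : Real.sin (v / 2) ≤ v / 2 := Real.sin_le (by linarith)
  have hc0 : 0 ≤ Real.cos (v / 2) :=
    Real.cos_nonneg_of_mem_Icc ⟨by linarith, by linarith⟩
  have hc : Real.cos (v / 2) ≤ 1 - 2 / Real.pi ^ 2 * (v / 2) ^ 2 := by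
    apply Real.cos_le_one_sub_mul_cos_sq
    rw [abs_of_nonneg (by linarith)]
    linarith
  have hsin : Real.sin v = 2 * Real.sin (v / 2) * Real.cos (v / 2) := by
    rw [← Real.sin_two_mul]; ring_nf
  rw [hsin]
  have hs0 : 0 ≤ Real.sin (v / 2) :=
    Real.sin_nonneg_of_nonneg_of_le_pi (by linarith) (by linarith)
  have h2 : 2 * Real.sin (v / 2) * Real.cos (v / 2) ≤ v * Real.cos (v / 2) := by
    nlinarith
  have h3 : v * Real.cos (v / 2) ≤ v * (1 - v ^ 2 / (2 * Real.pi ^ 2)) := by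
    apply mul_le_mul_of_nonneg_left _ h0
    have : 2 / Real.pi ^ 2 * (v / 2) ^ 2 = v ^ 2 / (2 * Real.pi ^ 2) := by
      field_simp
    linarith [hc, this.symm ▸ hc]
  linarith

/-- For all positive integers `k ≤ b` and every real `x` with `0 < x ≤ π/(b+k)`, one has
`(k/(b+k)) · sin((b+k)x)/sin(kx) ≤ 1 − b²x²/(2π²)`. -/
theorem stmt6 (k b : ℕ) (hk : 0 < k) (hkb : k ≤ b) (x : ℝ)
    (hx0 : 0 < x) (hx : x ≤ Real.pi / ((b : ℝ) + (k : ℝ))) :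
    ((k : ℝ) / ((b : ℝ) + (k : ℝ))) *
        (Real.sin (((b : ℝ) + (k : ℝ)) * x) / Real.sin ((k : ℝ) * x))
      ≤ 1 - (b : ℝ) ^ 2 * x ^ 2 / (2 * Real.pi ^ 2) := by
  have hpi := Real.pi_pos
  have hkR : (0 : ℝ) < k := by exact_mod_cast hk
  have hbR : (0 : ℝ) < b := by exact_mod_cast lt_of_lt_of_le hk hkb
  set S : ℝ := (b : ℝ) + (k : ℝ) with hS
  have hSpos : 0 < S := by positivity
  set u : ℝ := (k : ℝ) * x with hu
  set v : ℝ := (b : ℝ) * x with hv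
  have hu0 : 0 < u := by positivity
  have hv0 : 0 < v := by positivity
  have huv : u + v ≤ Real.pi := by
    have : S * x ≤ Real.pi := by
      rw [div_eq_mul_inv] at hx
      calc S * x ≤ S * (Real.pi * S⁻¹) := by
            apply mul_le_mul_of_nonneg_left hx hSpos.le
        _ = Real.pi := by field_simp
    calc u + v = S * x := by rw [hu, hv, hS]; ring
      _ ≤ Real.pi := this
  have hSx : S * x = u + v := by rw [hu, hv, hS]; ring
  have hsu : 0 < Real.sin u :=
    Real.sin_pos_of_pos_of_lt_pi hu0 (by linarith)
  have hsv0 : 0 ≤ Real.sin v :=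
    Real.sin_nonneg_of_nonneg_of_le_pi hv0.le (by linarith)
  -- Step 1: superadditivity
  have step1 : u * v * Real.sin (u + v) ≤ (u + v) * Real.sin u * Real.sin v := by
    rw [Real.sin_add]
    have h1 : u * Real.cos u ≤ Real.sin u := aux_mul_cos_le_sin hu0.le (by linarith)
    have h2 : v * Real.cos v ≤ Real.sin v := aux_mul_cos_le_sin hv0.le (by linarith)
    have f1 := mul_le_mul_of_nonneg_left h2 (mul_nonneg hu0.le hsu.le)
    have f2 := mul_le_mul_of_nonneg_left h1 (mul_nonneg hv0.le hsv0)
    nlinarith [f1, f2]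
  -- Step 2
  have step2 : Real.sin v ≤ v * (1 - v ^ 2 / (2 * Real.pi ^ 2)) :=
    aux_sin_le hv0.le (by linarith)
  -- Combine
  rw [div_mul_div_comm, div_le_iff₀ (by positivity)]
  rw [hSx]
  have hE : (b : ℝ) ^ 2 * x ^ 2 / (2 * Real.pi ^ 2) = v ^ 2 / (2 * Real.pi ^ 2) := by
    rw [hv]; ring
  rw [hE]
  -- goal : k * sin (u+v) ≤ (1 - v^2/(2π²)) * (S * sin u)
  have key : u * v * Real.sin (u + v) ≤ (u + v) * Real.sin u * (v * (1 - v ^ 2 / (2 * Real.pi ^ 2))) := by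
    calc u * v * Real.sin (u + v) ≤ (u + v) * Real.sin u * Real.sin v := step1
      _ ≤ (u + v) * Real.sin u * (v * (1 - v ^ 2 / (2 * Real.pi ^ 2))) := by
          apply mul_le_mul_of_nonneg_left step2
          positivity
  have hx2 : (0 : ℝ) < x ^ 2 := by positivity
  have hexp : u * v * Real.sin (u + v) = ((k : ℝ) * Real.sin (u + v)) * ((b:ℝ) * x ^ 2) := by
    rw [hu, hv]; ring
  have hexp2 : (u + v) * Real.sin u * (v * (1 - v ^ 2 / (2 * Real.pi ^ 2)))
      = ((1 - v ^ 2 / (2 * Real.pi ^ 2)) * (S * Real.sin u)) * ((b:ℝ) * x ^ 2) := by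
    rw [hu, hv, hS]; ring
  rw [hexp, hexp2] at key
  exact le_of_mul_le_mul_right key (by positivity)
end

section
/- For every real y with 0 ≤ y ≤ π, one has sin(y) ≤ y − y³/π². -/
/-!
For `y ≤ 2` the degree-five Taylor bound `sin y ≤ y - y³/6 + y⁵/120` already suffices, since
`y⁵/120 ≤ y³/30` and `1/6 - 1/30 ≥ 1/9 ≥ 1/π²`. For `y ≥ 2` use `sin y = sin (π - y) ≤ π - y`
instead: the difference `y - y³/π² - (π - y)` equals `(π - y) (y (π + y) - π²) / π²`, and
`y (π + y) ≥ 2 (π + 2) ≥ π²` because `π < 1 + √5`.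
-/

open Real Set

namespace Real

lemma cos_le_one_sub_sq_div_two_add_pow_four_div (x : ℝ) :
    cos x ≤ 1 - x ^ 2 / 2 + x ^ 4 / 24 := by
  wlog hx : 0 ≤ x
  · simpa [Even.neg_pow (by decide : Even 4)] using this (-x) (by linarith)
  let g (t : ℝ) : ℝ := 1 - t ^ 2 / 2 + t ^ 4 / 24 - cos t
  have hderiv (t : ℝ) : deriv g t = sin t - (t - t ^ 3 / 6) := by
    simp (disch := fun_prop) [g]
    ring
  have hmono : MonotoneOn g (Ici 0) := by
    refine monotoneOn_of_deriv_nonneg (convex_Ici 0) (by fun_prop) (by fun_prop) fun t ht => ?_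
    rw [interior_Ici] at ht
    simpa [hderiv] using sin_ge_sub_cube ht.le
  simpa [g] using hmono (mem_Ici.2 le_rfl) hx hx

lemma sin_le_sub_cube_add_pow_five_div {x : ℝ} (hx : 0 ≤ x) :
    sin x ≤ x - x ^ 3 / 6 + x ^ 5 / 120 := by
  let g (t : ℝ) : ℝ := t - t ^ 3 / 6 + t ^ 5 / 120 - sin t
  have hderiv (t : ℝ) : deriv g t = 1 - t ^ 2 / 2 + t ^ 4 / 24 - cos t := by
    simp (disch := fun_prop) [g]
    ring
  have hmono : MonotoneOn g (Ici 0) := by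
    refine monotoneOn_of_deriv_nonneg (convex_Ici 0) (by fun_prop) (by fun_prop) fun t _ => ?_
    simpa [hderiv] using cos_le_one_sub_sq_div_two_add_pow_four_div t
  simpa [g] using hmono (mem_Ici.2 le_rfl) hx hx

lemma sin_le_pi_sub {x : ℝ} (hx : x ≤ π) : sin x ≤ π - x := by
  simpa [sin_pi_sub] using sin_le (sub_nonneg.2 hx)

end Real

/-- For every real `y` with `0 ≤ y ≤ π`, one has `sin(y) ≤ y − y³/π²`. -/
theorem stmt7 (y : ℝ) (h0 : 0 ≤ y) (h1 : y ≤ Real.pi) :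
    Real.sin y ≤ y - y ^ 3 / Real.pi ^ 2 := by
  rcases le_total y 2 with hy | hy
  · have hcube : y ^ 3 / π ^ 2 ≤ y ^ 3 / 9 :=
      div_le_div_of_nonneg_left (by positivity) (by norm_num) (by nlinarith [pi_gt_three])
    have hquintic : y ^ 5 ≤ 4 * y ^ 3 := by
      nlinarith [mul_nonneg (pow_nonneg h0 3) (by nlinarith : 0 ≤ 4 - y ^ 2)]
    calc sin y ≤ y - y ^ 3 / 6 + y ^ 5 / 120 := sin_le_sub_cube_add_pow_five_div h0
      _ ≤ y - y ^ 3 / π ^ 2 := by linarith [pow_nonneg h0 3]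
  · have hquad : π ^ 2 ≤ y * (π + y) := by nlinarith [pi_lt_d2, pi_gt_three]
    calc sin y ≤ π - y := sin_le_pi_sub h1
      _ ≤ y - y ^ 3 / π ^ 2 := by
        rw [le_sub_iff_add_le, ← le_sub_iff_add_le', div_le_iff₀ (by positivity)]
        nlinarith [mul_nonneg (sub_nonneg.2 h1) (sub_nonneg.2 hquad)]
end

section
/- For all positive integers a, b and every real number t, there exists a bijection σ from {1, …, a} to {b+1, …, b+a} such that for every k ∈ {1, …, a}, |sin(kt)|/k ≥ |sin(σ(k)·t)|/σ(k). -/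
private lemma abs_sin_add_le' (x y : ℝ) : |Real.sin (x + y)| ≤ |Real.sin x| + |Real.sin y| := by
  rw [Real.sin_add]
  have h1 := abs_add_le (Real.sin x * Real.cos y) (Real.cos x * Real.sin y)
  rw [abs_mul, abs_mul] at h1
  have hcx := Real.abs_cos_le_one x
  have hcy := Real.abs_cos_le_one y
  have hsx := abs_nonneg (Real.sin x)
  have hsy := abs_nonneg (Real.sin y)
  have hcx0 := abs_nonneg (Real.cos x)
  have hcy0 := abs_nonneg (Real.cos y)
  nlinarith

private lemma pole_key (t : ℝ) : ∀ a : ℕ, 0 < a → ∀ b : ℕ,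
    ∃ σ : ℕ → ℕ, Set.BijOn σ (Set.Icc 1 a) (Set.Icc (b + 1) (b + a)) ∧
      ∀ k ∈ Set.Icc 1 a,
        |Real.sin ((σ k : ℝ) * t)| / (σ k : ℝ) ≤ |Real.sin ((k : ℝ) * t)| / (k : ℝ) := by
  intro a
  induction a using Nat.strong_induction_on with
  | _ a IH =>
  intro ha
  obtain ⟨p, hpmem, hpmin⟩ := Finset.exists_min_image (Finset.Icc 1 a)
    (fun n => |Real.sin ((n : ℝ) * t)| / (n : ℝ)) ⟨1, Finset.mem_Icc.mpr ⟨le_refl 1, ha⟩⟩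
  rw [Finset.mem_Icc] at hpmem
  intro b
  induction b using Nat.strong_induction_on with
  | _ b IHb =>
  rcases Nat.eq_zero_or_pos b with hb0 | hb0
  · subst hb0
    refine ⟨id, by simpa using Set.bijOn_id (Set.Icc 1 a), ?_⟩
    intro k _
    exact le_refl _
  rcases lt_or_ge b p with hbp | hbp
  · -- case 0 < b < p ≤ a
    have hba : b < a := lt_of_lt_of_le hbp hpmem.2
    obtain ⟨τ, hτbij, hτle⟩ := IH b hba hb0 a
    refine ⟨fun k => if k ≤ b then τ k else k, ⟨?_, ?_, ?_⟩, ?_⟩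
    · -- MapsTo
      intro k hk
      rw [Set.mem_Icc] at hk ⊢
      by_cases h : k ≤ b
      · simp only [if_pos h]
        have := hτbij.mapsTo (Set.mem_Icc.mpr ⟨hk.1, h⟩)
        rw [Set.mem_Icc] at this
        omega
      · simp only [if_neg h]
        omega
    · -- InjOn
      intro x hx y hy hxy
      rw [Set.mem_Icc] at hx hy
      by_cases h1 : x ≤ b <;> by_cases h2 : y ≤ b
      · simp only [if_pos h1, if_pos h2] at hxy
        exact hτbij.injOn (Set.mem_Icc.mpr ⟨hx.1, h1⟩) (Set.mem_Icc.mpr ⟨hy.1, h2⟩) hxy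
      · simp only [if_pos h1, if_neg h2] at hxy
        have := hτbij.mapsTo (Set.mem_Icc.mpr ⟨hx.1, h1⟩)
        rw [Set.mem_Icc] at this
        omega
      · simp only [if_neg h1, if_pos h2] at hxy
        have := hτbij.mapsTo (Set.mem_Icc.mpr ⟨hy.1, h2⟩)
        rw [Set.mem_Icc] at this
        omega
      · simp only [if_neg h1, if_neg h2] at hxy
        exact hxy
    · -- SurjOn
      intro m hm
      rw [Set.mem_Icc] at hm
      by_cases h : m ≤ a
      · refine ⟨m, Set.mem_Icc.mpr ⟨by omega, h⟩, ?_⟩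
        simp only [if_neg (by omega : ¬ m ≤ b)]
      · obtain ⟨k, hk, hτk⟩ := hτbij.surjOn (Set.mem_Icc.mpr ⟨by omega, by omega⟩ :
          m ∈ Set.Icc (a + 1) (a + b))
        rw [Set.mem_Icc] at hk
        refine ⟨k, Set.mem_Icc.mpr ⟨hk.1, by omega⟩, ?_⟩
        simp only [if_pos hk.2]
        exact hτk
    · -- inequality
      intro k hk
      rw [Set.mem_Icc] at hk
      by_cases h : k ≤ b
      · simp only [if_pos h]
        exact hτle k (Set.mem_Icc.mpr ⟨hk.1, h⟩)
      · simp only [if_neg h]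
        exact le_refl _
  · -- case p ≤ b : shift by p
    obtain ⟨τ, hτbij, hτle⟩ := IHb (b - p) (by omega)
    have hp1 : 1 ≤ p := hpmem.1
    refine ⟨fun k => τ k + p, ⟨?_, ?_, ?_⟩, ?_⟩
    · intro k hk
      have := hτbij.mapsTo hk
      rw [Set.mem_Icc] at this
      show τ k + p ∈ Set.Icc (b + 1) (b + a)
      rw [Set.mem_Icc]
      omega
    · intro x hx y hy hxy
      have hxy2 : τ x + p = τ y + p := hxy
      exact hτbij.injOn hx hy (by omega)
    · intro m hm
      rw [Set.mem_Icc] at hm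
      obtain ⟨k, hk, hτk⟩ := hτbij.surjOn (Set.mem_Icc.mpr ⟨by omega, by omega⟩ :
        m - p ∈ Set.Icc (b - p + 1) (b - p + a))
      refine ⟨k, hk, ?_⟩
      show τ k + p = m
      omega
    · intro k hk
      have hkm := hk
      rw [Set.mem_Icc] at hkm
      have hn := hτbij.mapsTo hk
      rw [Set.mem_Icc] at hn
      have h1 := hτle k hk
      have h2 := hpmin k (Finset.mem_Icc.mpr ⟨hkm.1, hkm.2⟩)
      show |Real.sin ((↑(τ k + p) : ℝ) * t)| / (↑(τ k + p) : ℝ) ≤ |Real.sin ((k : ℝ) * t)| / (k : ℝ)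
      have hn0 : (0 : ℝ) < (τ k : ℝ) := by
        have : 0 < τ k := by omega
        exact_mod_cast this
      have hp0 : (0 : ℝ) < (p : ℝ) := by exact_mod_cast hp1
      have hk0 : (0 : ℝ) < (k : ℝ) := by exact_mod_cast hkm.1
      push_cast
      rw [div_le_iff₀ (by positivity)]
      rw [div_le_iff₀ hn0] at h1
      rw [div_le_iff₀ hp0] at h2
      have h3 : |Real.sin (((τ k : ℝ) + (p : ℝ)) * t)| ≤
          |Real.sin ((τ k : ℝ) * t)| + |Real.sin ((p : ℝ) * t)| := by
        have := abs_sin_add_le' ((τ k : ℝ) * t) ((p : ℝ) * t)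
        rwa [← add_mul] at this
      nlinarith [abs_nonneg (Real.sin ((k : ℝ) * t)), h1, h2, h3]

/-- **Pole reduction.** For all positive integers `a, b` and every real `t`, there exists a
bijection `σ` from `{1, …, a}` to `{b+1, …, b+a}` such that for every `k ∈ {1, …, a}`,
`|sin(kt)|/k ≥ |sin(σ(k)·t)|/σ(k)`. -/
theorem stmt8 (a b : ℕ) (ha : 0 < a) (hb : 0 < b) (t : ℝ) :
    ∃ σ : ℕ → ℕ, Set.BijOn σ (Set.Icc 1 a) (Set.Icc (b + 1) (b + a)) ∧
      ∀ k ∈ Set.Icc 1 a,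
        |Real.sin ((σ k : ℝ) * t)| / (σ k : ℝ) ≤ |Real.sin ((k : ℝ) * t)| / (k : ℝ) := by
  obtain ⟨σ, h1, h2⟩ := pole_key t a ha b
  exact ⟨σ, h1, h2⟩
end

section
/- For all positive integers a, b and every real number t, there exists a bijection π from {1, …, a} to {b+1, …, b+a} such that for every k ∈ {1, …, a}, the k-interval of t encloses the π(k)-interval of t; explicitly, ⌊kt⌋/k ≤ ⌊π(k)·t⌋/π(k) and (⌊π(k)·t⌋+1)/π(k) ≤ (⌊kt⌋+1)/k. -/
/-!
Hall's marriage theorem reduces the claim to showing that every `s ⊆ {1, …, a}` encloses at least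
`#s` numbers of `{b+1, …, b+a}`. Enclosure is transitive, and of `i` and `j` at least one encloses
`i + j` (the endpoints of the `(i+j)`-interval are mediants of endpoints of the `i`- and
`j`-intervals), so every element of the additive monoid generated by `s` is enclosed by an element
of `s`. If `m` is the largest element of that monoid with `m ≤ b`, then `x ↦ m + x` maps `s`
injectively into `{b+1, …, b+a}`, onto numbers enclosed by `s`.
-/

open Finset

theorem Finset.exists_bijOn_of_forall_card_le_card_filter {α β : Type*} [DecidableEq β]
    [Nonempty β] {A : Finset α} {B : Finset β} (r : α → β → Prop) [DecidableRel r]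
    (hcard : #B ≤ #A) (hall : ∀ s ⊆ A, #s ≤ #{b ∈ B | ∃ a ∈ s, r a b}) :
    ∃ p : α → β, Set.BijOn p A B ∧ ∀ a ∈ A, r a (p a) := by
  classical
  obtain ⟨f, hf_inj, hf_mem⟩ :=
    (all_card_le_biUnion_card_iff_exists_injective fun a : A ↦ B.filter (r a)).1 fun s ↦ by
      have hneighbours : s.biUnion (fun a : A ↦ B.filter (r a)) =
          {b ∈ B | ∃ a ∈ s.map (.subtype _), r a b} := by
        ext; simp [and_left_comm]
      simpa [hneighbours] using hall (s.map (.subtype _)) (by intro; simp +contextual)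
  simp only [mem_filter] at hf_mem
  let p a := if h : a ∈ A then f ⟨a, h⟩ else Classical.arbitrary β
  have hp (a : A) : p a = f a := dif_pos a.2
  have hmaps : Set.MapsTo p A B := fun a ha ↦ hp ⟨a, ha⟩ ▸ (hf_mem _).1
  have hinj : Set.InjOn p A := fun a ha a' ha' h ↦ by
    simpa using hf_inj ((hp ⟨a, ha⟩).symm.trans (h.trans (hp ⟨a', ha'⟩)))
  exact ⟨p, ⟨hmaps, hinj, surjOn_of_injOn_of_card_le p hmaps hinj hcard⟩,
    fun a ha ↦ hp ⟨a, ha⟩ ▸ (hf_mem ⟨a, ha⟩).2⟩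

noncomputable def kInterval (k : ℕ) (t : ℝ) : Set ℝ :=
  Set.Ico (⌊k * t⌋ / k) ((⌊k * t⌋ + 1) / k)

-- Division by zero makes the `0`-interval empty, so `0` is enclosed by every `k`.
@[simp]
lemma kInterval_zero (t : ℝ) : kInterval 0 t = ∅ := by
  simp [kInterval]

lemma mem_kInterval_self {k : ℕ} (hk : 0 < k) (t : ℝ) : t ∈ kInterval k t := by
  have hk' : (0 : ℝ) < k := by exact_mod_cast hk
  constructor
  · rw [div_le_iff₀ hk', mul_comm]
    exact Int.floor_le _
  · rw [lt_div_iff₀ hk', mul_comm]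
    exact Int.lt_floor_add_one _

lemma kInterval_subset_iff {k l : ℕ} (hl : 0 < l) (t : ℝ) :
    kInterval l t ⊆ kInterval k t ↔
      (⌊k * t⌋ / k : ℝ) ≤ ⌊l * t⌋ / l ∧ ((⌊l * t⌋ + 1) / l : ℝ) ≤ (⌊k * t⌋ + 1) / k :=
  Set.Ico_subset_Ico_iff (Set.nonempty_Ico.mp ⟨t, mem_kInterval_self hl t⟩)

lemma mediant_mem_Icc {a b c d : ℝ} (hb : 0 < b) (hd : 0 < d) (h : a / b ≤ c / d) :
    (a + c) / (b + d) ∈ Set.Icc (a / b) (c / d) := by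
  rw [div_le_div_iff₀ hb hd] at h
  constructor <;> rw [div_le_div_iff₀ (by positivity) (by positivity)] <;> linarith

lemma kInterval_add_subset_or (i j : ℕ) (t : ℝ) :
    kInterval (i + j) t ⊆ kInterval i t ∨ kInterval (i + j) t ⊆ kInterval j t := by
  rcases i.eq_zero_or_pos with rfl | hi
  · simp
  rcases j.eq_zero_or_pos with rfl | hj
  · simp
  rw [kInterval_subset_iff (by omega), kInterval_subset_iff (by omega)]
  have hi' : (0 : ℝ) < i := by exact_mod_cast hi
  have hj' : (0 : ℝ) < j := by exact_mod_cast hj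
  obtain ⟨hxt, htx⟩ := mem_kInterval_self hi t
  obtain ⟨hyt, hty⟩ := mem_kInterval_self hj t
  have hz : ⌊((i : ℝ) + j) * t⌋ = ⌊i * t⌋ + ⌊j * t⌋ ∨
      ⌊((i : ℝ) + j) * t⌋ = ⌊i * t⌋ + ⌊j * t⌋ + 1 := by
    have := Int.le_floor_add (i * t) (j * t)
    have := Int.le_floor_add_floor (i * t) (j * t)
    rw [add_mul]
    omega
  set x : ℝ := (⌊i * t⌋ : ℝ)
  set y : ℝ := (⌊j * t⌋ : ℝ)
  push_cast
  rcases hz with hz | hz <;> rw [hz] <;> push_cast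
  · have hU_i : (x + y + 1) / (i + j) ≤ (x + 1) / i :=
      (mediant_mem_Icc hj' hi' (hyt.trans htx.le)).2.trans_eq' (by ring)
    have hU_j : (x + y + 1) / (i + j) ≤ (y + 1) / j :=
      (mediant_mem_Icc hi' hj' (hxt.trans hty.le)).2.trans_eq' (by ring)
    rcases le_total (x / i) (y / j) with h | h
    · exact .inl ⟨(mediant_mem_Icc hi' hj' h).1, hU_i⟩
    · exact .inr ⟨(mediant_mem_Icc hj' hi' h).1.trans_eq (by ring), hU_j⟩
  · have hL_i : x / i ≤ (x + y + 1) / (i + j) :=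
      (mediant_mem_Icc hi' hj' (hxt.trans hty.le)).1.trans_eq (by ring)
    have hL_j : y / j ≤ (x + y + 1) / (i + j) :=
      (mediant_mem_Icc hj' hi' (hyt.trans htx.le)).1.trans_eq (by ring)
    rcases le_total ((x + 1) / i) ((y + 1) / j) with h | h
    · exact .inr ⟨hL_j, (mediant_mem_Icc hi' hj' h).2.trans_eq' (by ring)⟩
    · exact .inl ⟨hL_i, (mediant_mem_Icc hj' hi' h).2.trans_eq' (by ring)⟩

lemma exists_kInterval_subset_of_mem_closure (t : ℝ) {S : Set ℕ} (hS : S.Nonempty) {l : ℕ}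
    (hl : l ∈ AddSubmonoid.closure S) : ∃ k ∈ S, kInterval l t ⊆ kInterval k t := by
  induction hl using AddSubmonoid.closure_induction with
  | mem k hk => exact ⟨k, hk, subset_rfl⟩
  | zero => exact ⟨hS.some, hS.some_mem, by simp⟩
  | add i j _ _ ihi ihj =>
    obtain ⟨ki, hki, hi⟩ := ihi
    obtain ⟨kj, hkj, hj⟩ := ihj
    rcases kInterval_add_subset_or i j t with h | h
    · exact ⟨ki, hki, h.trans hi⟩
    · exact ⟨kj, hkj, h.trans hj⟩

open Classical in
lemma card_le_card_filter_kInterval_subset (t : ℝ) {a : ℕ} (b : ℕ) {s : Finset ℕ}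
    (hs : s ⊆ Icc 1 a) :
    #s ≤ #{l ∈ Icc (b + 1) (b + a) | ∃ k ∈ s, kInterval l t ⊆ kInterval k t} := by
  let m := Nat.findGreatest (· ∈ AddSubmonoid.closure (s : Set ℕ)) b
  have hm : m ∈ AddSubmonoid.closure (s : Set ℕ) :=
    Nat.findGreatest_spec (Nat.zero_le b) (AddSubmonoid.zero_mem _)
  rw [← card_image_of_injective s (add_right_injective m)]
  refine card_le_card fun l hl ↦ ?_
  obtain ⟨x, hx, rfl⟩ := mem_image.mp hl
  have hx_mem : x ∈ Icc 1 a := hs hx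
  rw [mem_Icc] at hx_mem
  have hmx : m + x ∈ AddSubmonoid.closure (s : Set ℕ) :=
    add_mem hm (AddSubmonoid.subset_closure hx)
  have hb : b < m + x := by
    by_contra! h
    exact Nat.findGreatest_is_greatest (Nat.lt_add_of_pos_right hx_mem.1) h hmx
  have hmb : m ≤ b := Nat.findGreatest_le b
  rw [mem_filter, mem_Icc]
  exact ⟨⟨hb, by omega⟩, exists_kInterval_subset_of_mem_closure t ⟨x, hx⟩ hmx⟩

theorem stmt9_general (a b : ℕ) (t : ℝ) :
    ∃ p : ℕ → ℕ, Set.BijOn p (Set.Icc 1 a) (Set.Icc (b + 1) (b + a)) ∧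
      ∀ k ∈ Set.Icc 1 a,
        (⌊(k : ℝ) * t⌋ : ℝ) / (k : ℝ) ≤ (⌊(p k : ℝ) * t⌋ : ℝ) / (p k : ℝ) ∧
        ((⌊(p k : ℝ) * t⌋ : ℝ) + 1) / (p k : ℝ) ≤ ((⌊(k : ℝ) * t⌋ : ℝ) + 1) / (k : ℝ) := by
  classical
  obtain ⟨p, hp_bij, hp_subset⟩ := exists_bijOn_of_forall_card_le_card_filter
    (A := Icc 1 a) (B := Icc (b + 1) (b + a)) (fun k l ↦ kInterval l t ⊆ kInterval k t)
    (by simp) fun s hs ↦ card_le_card_filter_kInterval_subset t b hs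
  rw [coe_Icc, coe_Icc] at hp_bij
  refine ⟨p, hp_bij, fun k hk ↦ ?_⟩
  have hpk : 0 < p k := by have := (hp_bij.mapsTo hk).1; omega
  exact (kInterval_subset_iff hpk t).mp (hp_subset k (by simpa using hk))

/-- **Interval matching.** For all positive integers `a, b` and every real `t`, there exists a
bijection `p` from `{1, …, a}` to `{b+1, …, b+a}` such that for every `k ∈ {1, …, a}`, the
`k`-interval of `t` encloses the `p k`-interval of `t`; explicitly,
`⌊kt⌋/k ≤ ⌊p(k)·t⌋/p(k)` and `(⌊p(k)·t⌋+1)/p(k) ≤ (⌊kt⌋+1)/k`. -/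
theorem stmt9 (a b : ℕ) (ha : 0 < a) (hb : 0 < b) (t : ℝ) :
    ∃ p : ℕ → ℕ, Set.BijOn p (Set.Icc 1 a) (Set.Icc (b + 1) (b + a)) ∧
      ∀ k ∈ Set.Icc 1 a,
        (⌊(k : ℝ) * t⌋ : ℝ) / (k : ℝ) ≤ (⌊(p k : ℝ) * t⌋ : ℝ) / (p k : ℝ) ∧
        ((⌊(p k : ℝ) * t⌋ : ℝ) + 1) / (p k : ℝ) ≤ ((⌊(k : ℝ) * t⌋ : ℝ) + 1) / (k : ℝ) :=
  stmt9_general a b t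
end

section
/- Let A be a nonempty finite set of positive integers and let ℓ be a positive integer. The following are equivalent: (i) for every real number t there exists k ∈ A such that k encloses ℓ at t; (ii) every nonempty open interval I ⊆ ℝ which, for every k ∈ A, contains a rational number of the form m/k with m an integer, also contains a rational number of the form m/ℓ with m an integer. -/
/-- For a positive integer `k` and a real `t`, the `k`-interval of `t` is
`[⌊kt⌋/k, (⌊kt⌋+1)/k)`; `k` encloses `ℓ` at `t` if the `ℓ`-interval of `t` is a subset of the
`k`-interval of `t`. -/
def Encloses (k ℓ : ℕ) (t : ℝ) : Prop :=
  Set.Ico ((⌊(ℓ : ℝ) * t⌋ : ℝ) / (ℓ : ℝ)) (((⌊(ℓ : ℝ) * t⌋ : ℝ) + 1) / (ℓ : ℝ)) ⊆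
    Set.Ico ((⌊(k : ℝ) * t⌋ : ℝ) / (k : ℝ)) (((⌊(k : ℝ) * t⌋ : ℝ) + 1) / (k : ℝ))

/-- **Interval characterization.** Let `A` be a nonempty finite set of positive integers and
`ℓ` a positive integer. Then: (for every real `t` there is `k ∈ A` enclosing `ℓ` at `t`) iff
(every nonempty open interval which contains, for every `k ∈ A`, a fraction of denominator `k`
also contains a fraction of denominator `ℓ`). -/
theorem stmt10 (A : Finset ℕ) (hA : A.Nonempty) (hpos : ∀ k ∈ A, 0 < k)
    (ℓ : ℕ) (hℓ : 0 < ℓ) :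
    (∀ t : ℝ, ∃ k ∈ A, Encloses k ℓ t) ↔
      (∀ c d : ℝ, c < d →
        (∀ k ∈ A, ∃ m : ℤ, (m : ℝ) / (k : ℝ) ∈ Set.Ioo c d) →
        ∃ m : ℤ, (m : ℝ) / (ℓ : ℝ) ∈ Set.Ioo c d) := by
  have hℓR : (0:ℝ) < (ℓ:ℝ) := by exact_mod_cast hℓ
  constructor
  · intro h c d hcd hk
    by_contra hcon
    push_neg at hcon
    set a : ℤ := ⌊(ℓ:ℝ) * c⌋ with ha
    have h1 : (a:ℝ) ≤ (ℓ:ℝ) * c := Int.floor_le _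
    have h2 : (ℓ:ℝ) * c < (a:ℝ) + 1 := Int.lt_floor_add_one _
    have hac : (a:ℝ)/(ℓ:ℝ) ≤ c := by rw [div_le_iff₀ hℓR]; linarith
    have hca : c < ((a:ℝ)+1)/(ℓ:ℝ) := by rw [lt_div_iff₀ hℓR]; linarith
    have hd : d ≤ ((a:ℝ)+1)/(ℓ:ℝ) := by
      by_contra h'
      push_neg at h'
      exact hcon (a+1) ⟨by push_cast; linarith, by push_cast; linarith⟩
    set t := (c+d)/2 with ht
    have hct : c < t := by rw [ht]; linarith
    have htd : t < d := by rw [ht]; linarith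
    have hfl : ⌊(ℓ:ℝ) * t⌋ = a := by
      rw [Int.floor_eq_iff]
      constructor
      · nlinarith [(div_le_iff₀ hℓR).mp hac]
      · nlinarith [(lt_div_iff₀ hℓR).mp (lt_of_lt_of_le htd hd)]
    obtain ⟨k, hkA, hk2⟩ := h t
    have hkR : (0:ℝ) < (k:ℝ) := by exact_mod_cast hpos k hkA
    unfold Encloses at hk2
    rw [hfl] at hk2
    have hlt : (a:ℝ)/(ℓ:ℝ) < ((a:ℝ)+1)/(ℓ:ℝ) := by
      exact (div_lt_div_iff_of_pos_right hℓR).mpr (by linarith)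
    obtain ⟨hL, hR⟩ := (Set.Ico_subset_Ico_iff hlt).mp hk2
    obtain ⟨m, hm1, hm2⟩ := hk k hkA
    have e1 : ((⌊(k:ℝ)*t⌋:ℝ)) < m := by
      have : (⌊(k:ℝ)*t⌋:ℝ)/(k:ℝ) < (m:ℝ)/(k:ℝ) := by linarith
      exact (div_lt_div_iff_of_pos_right hkR).mp this
    have e2 : (m:ℝ) < (⌊(k:ℝ)*t⌋:ℝ) + 1 := by
      have : (m:ℝ)/(k:ℝ) < ((⌊(k:ℝ)*t⌋:ℝ)+1)/(k:ℝ) := by linarith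
      exact (div_lt_div_iff_of_pos_right hkR).mp this
    have e1' : ⌊(k:ℝ)*t⌋ < m := by exact_mod_cast e1
    have e2' : m < ⌊(k:ℝ)*t⌋ + 1 := by exact_mod_cast e2
    omega
  · intro h t
    set a : ℤ := ⌊(ℓ:ℝ) * t⌋ with ha
    have h1 : (a:ℝ) ≤ (ℓ:ℝ) * t := Int.floor_le _
    have h2 : (ℓ:ℝ) * t < (a:ℝ) + 1 := Int.lt_floor_add_one _
    have hat : (a:ℝ)/(ℓ:ℝ) ≤ t := by rw [div_le_iff₀ hℓR]; linarith
    have hta : t < ((a:ℝ)+1)/(ℓ:ℝ) := by rw [lt_div_iff₀ hℓR]; linarith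
    have hlt : (a:ℝ)/(ℓ:ℝ) < ((a:ℝ)+1)/(ℓ:ℝ) := lt_of_le_of_lt hat hta
    by_contra hcon
    push_neg at hcon
    obtain ⟨m, hm1, hm2⟩ := h ((a:ℝ)/(ℓ:ℝ)) (((a:ℝ)+1)/(ℓ:ℝ)) hlt (by
      intro k hkA
      have hkR : (0:ℝ) < (k:ℝ) := by exact_mod_cast hpos k hkA
      have hne := hcon k hkA
      unfold Encloses at hne
      rw [← ha] at hne
      rw [Set.Ico_subset_Ico_iff hlt] at hne
      push_neg at hne
      have hkt1 : (⌊(k:ℝ)*t⌋:ℝ)/(k:ℝ) ≤ t := by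
        rw [div_le_iff₀ hkR]
        have := Int.floor_le ((k:ℝ)*t); linarith
      have hkt2 : t < ((⌊(k:ℝ)*t⌋:ℝ)+1)/(k:ℝ) := by
        rw [lt_div_iff₀ hkR]
        have := Int.lt_floor_add_one ((k:ℝ)*t); linarith
      by_cases hc : (⌊(k:ℝ)*t⌋:ℝ)/(k:ℝ) ≤ (a:ℝ)/(ℓ:ℝ)
      · refine ⟨⌊(k:ℝ)*t⌋ + 1, ?_, ?_⟩
        · push_cast; linarith
        · push_cast; linarith [hne hc]
      · push_neg at hc
        exact ⟨⌊(k:ℝ)*t⌋, hc, by linarith⟩)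
    have e1 : (a:ℝ) < m := by
      have := (div_lt_div_iff_of_pos_right hℓR).mp hm1; linarith
    have e2 : (m:ℝ) < (a:ℝ) + 1 := by
      have := (div_lt_div_iff_of_pos_right hℓR).mp hm2; linarith
    have e1' : a < m := by exact_mod_cast e1
    have e2' : m < a + 1 := by exact_mod_cast e2
    omega
end

section
/- Let A be a nonempty finite set of positive integers and define N(A) to be the set of positive integers ℓ such that for every real number t there exists k ∈ A with k enclosing ℓ at t. If ℓ₁ ∈ N(A) and ℓ₂ ∈ N(A), then ℓ₁ + ℓ₂ ∈ N(A). -/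
lemma key_encloses (ℓ₁ ℓ₂ : ℕ) (h1 : 0 < ℓ₁) (h2 : 0 < ℓ₂) (t : ℝ) :
    Encloses ℓ₁ (ℓ₁ + ℓ₂) t ∨ Encloses ℓ₂ (ℓ₁ + ℓ₂) t := by
  have hL1 : (0:ℝ) < (ℓ₁:ℝ) := by exact_mod_cast h1
  have hL2 : (0:ℝ) < (ℓ₂:ℝ) := by exact_mod_cast h2
  have hcast : ((ℓ₁ + ℓ₂ : ℕ) : ℝ) = (ℓ₁:ℝ) + (ℓ₂:ℝ) := by push_cast; ring
  unfold Encloses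
  rw [hcast]
  set L1 : ℝ := (ℓ₁:ℝ) with hL1d
  set L2 : ℝ := (ℓ₂:ℝ) with hL2d
  set a : ℤ := ⌊L1 * t⌋ with ha_def
  set b : ℤ := ⌊L2 * t⌋ with hb_def
  set m : ℤ := ⌊(L1 + L2) * t⌋ with hm_def
  have ha1 : (a:ℝ) ≤ L1 * t := Int.floor_le _
  have ha2 : L1 * t < a + 1 := Int.lt_floor_add_one _
  have hb1 : (b:ℝ) ≤ L2 * t := Int.floor_le _
  have hb2 : L2 * t < b + 1 := Int.lt_floor_add_one _
  have hm1 : (m:ℝ) ≤ (L1 + L2) * t := Int.floor_le _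
  have hm2 : (L1 + L2) * t < m + 1 := Int.lt_floor_add_one _
  have hml : a + b ≤ m := by
    apply Int.le_floor.mpr
    push_cast
    nlinarith
  have hmu : m ≤ a + b + 1 := by
    have : m < a + b + 2 := by
      apply Int.floor_lt.mpr
      push_cast
      nlinarith
    omega
  have hab : L1 * b < L2 * (a + 1) := by nlinarith
  have hba : L2 * a < L1 * (b + 1) := by nlinarith
  have hm : m = a + b ∨ m = a + b + 1 := by omega
  clear_value m b a L2 L1
  have hLpos : (0:ℝ) < L1 + L2 := by linarith
  have goal1 : (a:ℝ) * (L1 + L2) ≤ (m:ℝ) * L1 → ((m:ℝ) + 1) * L1 ≤ ((a:ℝ) + 1) * (L1 + L2) →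
      Set.Ico ((m:ℝ) / (L1 + L2)) (((m:ℝ) + 1) / (L1 + L2)) ⊆
        Set.Ico ((a:ℝ) / L1) (((a:ℝ) + 1) / L1) := by
    intro hx hy
    apply Set.Ico_subset_Ico
    · rw [div_le_div_iff₀ hL1 hLpos]; linarith
    · rw [div_le_div_iff₀ hLpos hL1]; linarith
  have goal2 : (b:ℝ) * (L1 + L2) ≤ (m:ℝ) * L2 → ((m:ℝ) + 1) * L2 ≤ ((b:ℝ) + 1) * (L1 + L2) →
      Set.Ico ((m:ℝ) / (L1 + L2)) (((m:ℝ) + 1) / (L1 + L2)) ⊆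
        Set.Ico ((b:ℝ) / L2) (((b:ℝ) + 1) / L2) := by
    intro hx hy
    apply Set.Ico_subset_Ico
    · rw [div_le_div_iff₀ hL2 hLpos]; linarith
    · rw [div_le_div_iff₀ hLpos hL2]; linarith
  rcases hm with hm | hm
  · have hmr : (m:ℝ) = (a:ℝ) + (b:ℝ) := by exact_mod_cast hm
    rcases le_total (L2 * a) (L1 * b) with h | h
    · left; apply goal1 <;> (rw [hmr]; ring_nf; ring_nf at h hab hba; linarith [h, hab, hba])
    · right; apply goal2 <;> (rw [hmr]; ring_nf; ring_nf at h hab hba; linarith [h, hab, hba])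
  · have hmr : (m:ℝ) = (a:ℝ) + (b:ℝ) + 1 := by exact_mod_cast hm
    rcases le_total (L1 * ((b:ℝ) + 1)) (L2 * ((a:ℝ) + 1)) with h | h
    · left; apply goal1 <;> (rw [hmr]; ring_nf; ring_nf at h hab hba; linarith [h, hab, hba])
    · right; apply goal2 <;> (rw [hmr]; ring_nf; ring_nf at h hab hba; linarith [h, hab, hba])

/-- **N(A) is closed under addition.** Let `A` be a nonempty finite set of positive integers
and let `N(A)` be the set of positive integers `ℓ` such that for every real `t` there exists
`k ∈ A` with `k` enclosing `ℓ` at `t`. If `ℓ₁, ℓ₂ ∈ N(A)` then `ℓ₁ + ℓ₂ ∈ N(A)`. -/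
theorem stmt11 (A : Finset ℕ) (hA : A.Nonempty) (hpos : ∀ k ∈ A, 0 < k)
    (ℓ₁ ℓ₂ : ℕ) (h1 : 0 < ℓ₁) (h2 : 0 < ℓ₂)
    (H1 : ∀ t : ℝ, ∃ k ∈ A, Encloses k ℓ₁ t)
    (H2 : ∀ t : ℝ, ∃ k ∈ A, Encloses k ℓ₂ t) :
    ∀ t : ℝ, ∃ k ∈ A, Encloses k (ℓ₁ + ℓ₂) t := by
  intro t
  rcases key_encloses ℓ₁ ℓ₂ h1 h2 t with h | h
  · obtain ⟨k, hk, hke⟩ := H1 t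
    exact ⟨k, hk, fun x hx => hke (h hx)⟩
  · obtain ⟨k, hk, hke⟩ := H2 t
    exact ⟨k, hk, fun x hx => hke (h hx)⟩
end

section
/- Let a be a positive integer and let A be a nonempty set of positive integers with max(A) ≤ a. Let Sum(A) be the set of positive integers that can be written as a finite sum of not necessarily distinct elements of A. Then for every nonnegative integer n, the set Sum(A) ∩ {n+1, …, n+a} has at least |A| elements. -/
/-- Let `a` be a positive integer and `A` a nonempty finite set of positive integers all at
most `a`. Let `Sum(A)` be the set of positive integers expressible as a finite sum of one or
more, not necessarily distinct, elements of `A`. Then for every nonnegative integer `n`, the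
set `Sum(A) ∩ {n+1, …, n+a}` has at least `|A|` elements. -/
theorem stmt12 (a : ℕ) (ha : 0 < a) (A : Finset ℕ) (hA : A.Nonempty)
    (hpos : ∀ x ∈ A, 0 < x) (hle : ∀ x ∈ A, x ≤ a) (n : ℕ) :
    A.card ≤
      ({s : ℕ | s ∈ Set.Icc (n + 1) (n + a) ∧
        ∃ l : Multiset ℕ, l ≠ 0 ∧ (∀ x ∈ l, x ∈ A) ∧ l.sum = s}).ncard := by
  classical
  set P : ℕ → Prop :=
    fun s => s = 0 ∨ ∃ l : Multiset ℕ, l ≠ 0 ∧ (∀ x ∈ l, x ∈ A) ∧ l.sum = s with hP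
  set F : Finset ℕ := (Finset.range (n+1)).filter P with hF
  have h0 : 0 ∈ F := by simp [hF, hP]
  have hFne : F.Nonempty := ⟨0, h0⟩
  set m := F.max' hFne with hm
  have hmem : m ∈ (Finset.range (n+1)).filter P := F.max'_mem hFne
  rw [Finset.mem_filter, Finset.mem_range] at hmem
  have hmn : m ≤ n := by omega
  have hmP : P m := hmem.2
  have key : ∀ x ∈ A, P (m + x) ∧ n < m + x := by
    intro x hx
    have hPx : P (m + x) := by
      rcases hmP with h | ⟨l, hl0, hlA, hls⟩
      · right
        exact ⟨{x}, by simp, by simpa using hx, by simp [h]⟩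
      · right
        refine ⟨x ::ₘ l, by simp, ?_, ?_⟩
        · intro y hy
          rcases Multiset.mem_cons.1 hy with rfl | h
          · exact hx
          · exact hlA y h
        · simp [hls]; ring
    refine ⟨hPx, ?_⟩
    by_contra h
    push_neg at h
    have hmemF : m + x ∈ F := by
      rw [hF, Finset.mem_filter, Finset.mem_range]
      exact ⟨by omega, hPx⟩
    have := F.le_max' _ hmemF
    have hx0 := hpos x hx
    omega
  have hsub : (↑(A.image (fun x => m + x)) : Set ℕ) ⊆
      {s : ℕ | s ∈ Set.Icc (n + 1) (n + a) ∧
        ∃ l : Multiset ℕ, l ≠ 0 ∧ (∀ x ∈ l, x ∈ A) ∧ l.sum = s} := by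
    intro s hs
    simp only [Finset.coe_image, Set.mem_image, Finset.mem_coe] at hs
    obtain ⟨x, hx, rfl⟩ := hs
    obtain ⟨hPx, hn⟩ := key x hx
    rcases hPx with h | hl
    · omega
    · exact ⟨Set.mem_Icc.2 ⟨by omega, by have := hle x hx; omega⟩, hl⟩
  have hfin : ({s : ℕ | s ∈ Set.Icc (n + 1) (n + a) ∧
      ∃ l : Multiset ℕ, l ≠ 0 ∧ (∀ x ∈ l, x ∈ A) ∧ l.sum = s}).Finite :=
    (Set.finite_Icc (n+1) (n+a)).subset fun s hs => hs.1
  calc A.card = (A.image (fun x => m + x)).card :=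
        (Finset.card_image_of_injective _ (fun a b h => by omega)).symm
    _ = (↑(A.image (fun x => m + x)) : Set ℕ).ncard := (Set.ncard_coe_finset _).symm
    _ ≤ _ := Set.ncard_le_ncard hsub hfin
end

section
/- Let f : ℝ → ℝ be a function with period 1 that is concave on [0, 1] and satisfies f(0) = f(1) = 0. Let t be a real number and let k, ℓ be positive integers such that the k-interval of t encloses the ℓ-interval of t. Then f(kt)/k ≥ f(ℓt)/ℓ. -/
theorem Function.Periodic.apply_fract {α β : Type*} [Ring α] [LinearOrder α] [FloorRing α]
    {f : α → β} (hf : Function.Periodic f 1) (x : α) : f (Int.fract x) = f x := by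
  rw [Int.fract]
  simpa only [mul_one] using hf.sub_int_mul_eq ⌊x⌋

theorem ConcaveOn.nonneg_of_mem_Icc {f : ℝ → ℝ} {a b : ℝ} (hf : ConcaveOn ℝ (Set.Icc a b) f)
    (ha : 0 ≤ f a) (hb : 0 ≤ f b) {z : ℝ} (hz : z ∈ Set.Icc a b) : 0 ≤ f z := by
  have hab : a ≤ b := hz.1.trans hz.2
  have hseg : z ∈ segment ℝ a b := by rwa [segment_eq_Icc hab]
  exact (le_min ha hb).trans
    (hf.ge_on_segment (Set.left_mem_Icc.2 hab) (Set.right_mem_Icc.2 hab) hseg)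

theorem ConcaveOn.mul_le_apply_mul_add {f : ℝ → ℝ} (hf : ConcaveOn ℝ (Set.Icc 0 1) f)
    (h0 : 0 ≤ f 0) (h1 : 0 ≤ f 1) {x l c : ℝ} (hx : x ∈ Set.Icc (0 : ℝ) 1)
    (hl : 0 ≤ l) (hc : 0 ≤ c) (hlc : l + c ≤ 1) :
    l * f x ≤ f (l * x + c) := by
  obtain hl1 | rfl := (show l ≤ 1 by linarith).lt_or_eq
  · -- `l x + c` is the convex combination of `x` and `z = c / (1 - l) ∈ [0, 1]`.
    have h1l : 0 < 1 - l := sub_pos.2 hl1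
    set z := c / (1 - l)
    have hz : z ∈ Set.Icc (0 : ℝ) 1 :=
      ⟨div_nonneg hc h1l.le, (div_le_one h1l).2 (by linarith)⟩
    have hcomb : l • x + (1 - l) • z = l * x + c := by
      simp only [smul_eq_mul, z]
      field_simp
    have hfz : 0 ≤ (1 - l) * f z := mul_nonneg h1l.le (hf.nonneg_of_mem_Icc h0 h1 hz)
    have := hf.2 hx hz hl h1l.le (add_sub_cancel l 1)
    rw [hcomb, smul_eq_mul, smul_eq_mul] at this
    linarith
  · obtain rfl : c = 0 := by linarith
    simp

theorem Encloses.floor_bounds {k ℓ : ℕ} {t : ℝ} (hk : 0 < k) (hℓ : 0 < ℓ) (h : Encloses k ℓ t) :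
    (ℓ : ℝ) * ⌊(k : ℝ) * t⌋ ≤ k * ⌊(ℓ : ℝ) * t⌋ ∧
      (k : ℝ) * (⌊(ℓ : ℝ) * t⌋ + 1) ≤ ℓ * (⌊(k : ℝ) * t⌋ + 1) := by
  have hK : (0 : ℝ) < k := Nat.cast_pos.2 hk
  have hL : (0 : ℝ) < ℓ := Nat.cast_pos.2 hℓ
  obtain ⟨hleft, hright⟩ := (Set.Ico_subset_Ico_iff (by gcongr; linarith)).1 h
  rw [div_le_div_iff₀ hK hL] at hleft
  rw [div_le_div_iff₀ hL hK] at hright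
  constructor <;> linarith

/-- Let `f : ℝ → ℝ` have period `1`, be concave on `[0,1]`, and satisfy `f(0) = f(1) = 0`.
Let `t` be real and `k, ℓ` positive integers such that the `k`-interval of `t` encloses the
`ℓ`-interval of `t`. Then `f(kt)/k ≥ f(ℓt)/ℓ`. -/
theorem stmt13 (f : ℝ → ℝ) (hper : ∀ x : ℝ, f (x + 1) = f x)
    (hconc : ConcaveOn ℝ (Set.Icc (0 : ℝ) 1) f) (h0 : f 0 = 0) (h1 : f 1 = 0)
    (t : ℝ) (k ℓ : ℕ) (hk : 0 < k) (hℓ : 0 < ℓ)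
    (hencl : Encloses k ℓ t) :
    f ((ℓ : ℝ) * t) / (ℓ : ℝ) ≤ f ((k : ℝ) * t) / (k : ℝ) := by
  have hK : (0 : ℝ) < k := Nat.cast_pos.2 hk
  have hL : (0 : ℝ) < ℓ := Nat.cast_pos.2 hℓ
  obtain ⟨hleft, hright⟩ := hencl.floor_bounds hk hℓ
  set a : ℝ := (⌊(ℓ : ℝ) * t⌋ : ℝ)
  set b : ℝ := (⌊(k : ℝ) * t⌋ : ℝ)
  have haffine :
      Int.fract ((k : ℝ) * t) = k / ℓ * Int.fract ((ℓ : ℝ) * t) + (k * a - ℓ * b) / ℓ := by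
    simp only [Int.fract, a, b]
    field_simp
    ring
  have key := hconc.mul_le_apply_mul_add h0.ge h1.ge
    ⟨Int.fract_nonneg ((ℓ : ℝ) * t), (Int.fract_lt_one _).le⟩
    (l := k / ℓ) (c := (k * a - ℓ * b) / ℓ)
    (by positivity) (div_nonneg (by linarith) hL.le)
    (by rw [← add_div, div_le_one hL]; linarith)
  have hP : Function.Periodic f 1 := hper
  rw [← haffine, hP.apply_fract, hP.apply_fract, div_mul_eq_mul_div, div_le_iff₀ hL] at key
  rw [div_le_div_iff₀ hL hK]
  linarith
end

section
/- There is a constant c' such that for every full binary tree T with n leaves, the sum over all internal nodes v of T whose subtree contains at least 3 leaves of √(n_{v,1}·n_{v,2}/(n_{v,1}+n_{v,2})) is at most c'·n, where n_{v,1} and n_{v,2} denote the numbers of leaves in the subtrees rooted at the two children of v. -/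
/-- A full binary tree: every internal node has exactly two children. -/
inductive BTree : Type
  | leaf : BTree
  | node : BTree → BTree → BTree

/-- The number of leaves of a full binary tree. -/
def BTree.leaves : BTree → ℕ
  | .leaf => 1
  | .node l r => l.leaves + r.leaves

/-- The sum, over all internal nodes `v` whose subtree contains at least 3 leaves, of
`√(n_{v,1}·n_{v,2}/(n_{v,1}+n_{v,2}))`, where `n_{v,1}` and `n_{v,2}` are the numbers of
leaves in the subtrees rooted at the two children of `v`. -/
noncomputable def BTree.wsum : BTree → ℝ
  | .leaf => 0
  | .node l r =>
      (if 3 ≤ l.leaves + r.leaves then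
        Real.sqrt (((l.leaves : ℝ) * (r.leaves : ℝ)) / ((l.leaves : ℝ) + (r.leaves : ℝ)))
      else 0) + l.wsum + r.wsum

lemma BTree.one_le_leaves : ∀ T : BTree, 1 ≤ T.leaves
  | .leaf => le_refl 1
  | .node l r => by
      have := l.one_le_leaves
      simp [BTree.leaves]; omega

lemma key_ineq (a b : ℝ) (ha : 1 ≤ a) (hb : 1 ≤ b) :
    Real.sqrt (a * b / (a + b)) ≤
      2 * (Real.sqrt a + Real.sqrt b - Real.sqrt (a + b)) := by
  have ha0 : (0:ℝ) ≤ a := by linarith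
  have hb0 : (0:ℝ) ≤ b := by linarith
  have hab0 : (0:ℝ) < a + b := by linarith
  set s := Real.sqrt a with hs
  set t := Real.sqrt b with ht
  set u := Real.sqrt (a + b) with hu
  have hs0 : 0 ≤ s := Real.sqrt_nonneg _
  have ht0 : 0 ≤ t := Real.sqrt_nonneg _
  have hu0 : 0 < u := Real.sqrt_pos.mpr hab0
  have hsu : s ≤ u := Real.sqrt_le_sqrt (by linarith)
  have htu : t ≤ u := Real.sqrt_le_sqrt (by linarith)
  have hs2 : s ^ 2 = a := Real.sq_sqrt ha0
  have ht2 : t ^ 2 = b := Real.sq_sqrt hb0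
  have hu2 : u ^ 2 = a + b := Real.sq_sqrt hab0.le
  have hdiv : Real.sqrt (a * b / (a + b)) = s * t / u := by
    rw [Real.sqrt_div (by positivity), Real.sqrt_mul ha0]
  rw [hdiv, div_le_iff₀ hu0]
  nlinarith [mul_nonneg hs0 ht0, sq_nonneg (s + t - u), sq_nonneg (s - t)]

lemma BTree.wsum_le : ∀ T : BTree,
    T.wsum ≤ 2 * (T.leaves : ℝ) - 2 * Real.sqrt (T.leaves : ℝ)
  | .leaf => by simp [BTree.wsum, BTree.leaves]
  | .node l r => by
      have hl := l.wsum_le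
      have hr := r.wsum_le
      have hl1 : (1:ℝ) ≤ (l.leaves : ℝ) := by exact_mod_cast l.one_le_leaves
      have hr1 : (1:ℝ) ≤ (r.leaves : ℝ) := by exact_mod_cast r.one_le_leaves
      have hkey := key_ineq (l.leaves : ℝ) (r.leaves : ℝ) hl1 hr1
      have hnn : (0:ℝ) ≤ 2 * (Real.sqrt (l.leaves : ℝ) + Real.sqrt (r.leaves : ℝ)
          - Real.sqrt ((l.leaves : ℝ) + (r.leaves : ℝ))) :=
        le_trans (Real.sqrt_nonneg _) hkey
      have hif : (if 3 ≤ l.leaves + r.leaves then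
            Real.sqrt (((l.leaves : ℝ) * (r.leaves : ℝ)) / ((l.leaves : ℝ) + (r.leaves : ℝ)))
          else 0) ≤ 2 * (Real.sqrt (l.leaves : ℝ) + Real.sqrt (r.leaves : ℝ)
          - Real.sqrt ((l.leaves : ℝ) + (r.leaves : ℝ))) := by
        split
        · exact hkey
        · exact hnn
      have hcast : ((BTree.node l r).leaves : ℝ) = (l.leaves : ℝ) + (r.leaves : ℝ) := by
        simp [BTree.leaves]
      rw [BTree.wsum, hcast]
      linarith

/-- There is a constant `c'` such that for every full binary tree `T` with `n` leaves, the sum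
over all internal nodes `v` whose subtree contains at least 3 leaves of
`√(n_{v,1}·n_{v,2}/(n_{v,1}+n_{v,2}))` is at most `c'·n`. -/
theorem stmt15 : ∃ c' : ℝ, ∀ T : BTree, T.wsum ≤ c' * (T.leaves : ℝ) := by
  refine ⟨2, fun T => ?_⟩
  have := T.wsum_le
  have h0 : 0 ≤ Real.sqrt (T.leaves : ℝ) := Real.sqrt_nonneg _
  linarith
end

section
/- Let X be a finite set of size n, let A and B be disjoint subsets of X, let ρ : X → {1, …, n} be a bijection, and let r ∈ {1, …, n−1} be such that ρ⁻¹(r) ∈ A and ρ⁻¹(r+1) ∈ B. Let τρ denote the ranking obtained from ρ by composing with the transposition of the values r and r+1. Then min(XInv_ρ(A,B), XInv_ρ(B,A)) = min(XInv_{τρ}(A,B), XInv_{τρ}(B,A)) if and only if XInv_ρ(A,B) − XInv_ρ(B,A) = −1. -/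
/-- The number of cross inversions from `S` to `T` with respect to the ranking `σ`:
`XInv_σ(S,T) = #{(x, y) ∈ S × T : σ(x) > σ(y)}`. -/
def XInv {X : Type*} [DecidableEq X] {n : ℕ} (σ : X ≃ Fin n) (S T : Finset X) : ℕ :=
  ((S ×ˢ T).filter (fun p => σ p.2 < σ p.1)).card

/-!
Transposing the adjacent ranks `r` and `r + 1` changes the relative order of exactly one pair,
namely `ρ⁻¹(r) ∈ A` and `ρ⁻¹(r+1) ∈ B`. Hence `XInv(A,B)` goes up by one and `XInv(B,A)` goes
down by one, and `min(p, q) = min(p + 1, q - 1)` holds exactly when `p = q - 1`.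
-/

open Equiv

theorem Fin.swap_lt_swap_iff_of_val_eq_succ {n : ℕ} {r r' : Fin n} (hr : (r' : ℕ) = r + 1)
    {i j : Fin n} (hij : ¬(i = r ∧ j = r')) (hji : ¬(i = r' ∧ j = r)) :
    swap r r' j < swap r r' i ↔ j < i := by
  simp only [swap_apply_def]
  split_ifs <;> simp only [Fin.lt_def, Fin.ext_iff] at * <;> omega

theorem XInv_trans_swap_of_val_eq_succ {X : Type*} [DecidableEq X] {n : ℕ} (σ : X ≃ Fin n) {S T : Finset X} (hST : Disjoint S T)
    {r r' : Fin n} (hr : (r' : ℕ) = r + 1) (hS : σ.symm r ∈ S) (hT : σ.symm r' ∈ T) :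
    XInv (σ.trans (swap r r')) S T = XInv σ S T + 1 := by
  have hpair_notMem : (σ.symm r, σ.symm r') ∉ (S ×ˢ T).filter (fun p => σ p.2 < σ p.1) := by
    intro hmem
    have hlt := (Finset.mem_filter.mp hmem).2
    simp only [apply_symm_apply, Fin.lt_def] at hlt
    omega
  unfold XInv
  rw [← Finset.card_insert_of_notMem hpair_notMem]
  congr 1
  ext ⟨x, y⟩
  simp only [Finset.mem_insert, Finset.mem_filter, Finset.mem_product, Prod.mk.injEq]
  simp only [trans_apply]
  by_cases hxy : x = σ.symm r ∧ y = σ.symm r'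
  · obtain ⟨rfl, rfl⟩ := hxy
    simp only [hS, hT, apply_symm_apply, swap_apply_left, swap_apply_right, and_self,
      true_and, true_or, iff_true, Fin.lt_def]
    omega
  · have hreversed : ¬(x ∈ S ∧ y ∈ T ∧ σ x = r' ∧ σ y = r) := by
      rintro ⟨hx, -, hσx, -⟩
      exact Finset.disjoint_left.mp hST (σ.symm_apply_eq.mpr hσx.symm ▸ hx) hT
    have hxy' : ¬(σ x = r ∧ σ y = r') := by
      simpa only [σ.eq_symm_apply] using hxy
    by_cases hmem : x ∈ S ∧ y ∈ T
    · rw [Fin.swap_lt_swap_iff_of_val_eq_succ hr hxy' (by tauto)]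
      tauto
    · tauto

theorem stmt17_general (X : Type*) [DecidableEq X] (n : ℕ)
    (A B : Finset X) (hAB : Disjoint A B)
    (ρ : X ≃ Fin n) (r r' : Fin n) (hr : (r' : ℕ) = (r : ℕ) + 1)
    (hA : ρ.symm r ∈ A) (hB : ρ.symm r' ∈ B) :
    (min (XInv ρ A B) (XInv ρ B A)
        = min (XInv (ρ.trans (Equiv.swap r r')) A B) (XInv (ρ.trans (Equiv.swap r r')) B A))
      ↔ (XInv ρ A B : ℤ) - (XInv ρ B A : ℤ) = -1 := by
  have hAB_up := XInv_trans_swap_of_val_eq_succ ρ hAB hr hA hB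
  -- The transposed ranking sees the same pair in the opposite order, and transposing back gives `ρ`.
  have hBA_down : XInv ρ B A = XInv (ρ.trans (swap r r')) B A + 1 := by
    simpa [Equiv.trans_assoc] using
      XInv_trans_swap_of_val_eq_succ (ρ.trans (swap r r')) hAB.symm hr
        (by simpa using hB) (by simpa using hA)
  rw [hAB_up, hBA_down]
  omega

/-- Let `X` be a finite set of size `n`, `A` and `B` disjoint subsets of `X`, `ρ : X ≃ Fin n`
a ranking, and `r, r'` consecutive ranks (`r' = r + 1`) with `ρ⁻¹(r) ∈ A` and `ρ⁻¹(r') ∈ B`.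
Let `τρ` be the ranking obtained from `ρ` by composing with the transposition of the values
`r` and `r'`. Then `min(XInv_ρ(A,B), XInv_ρ(B,A)) = min(XInv_{τρ}(A,B), XInv_{τρ}(B,A))`
iff `XInv_ρ(A,B) − XInv_ρ(B,A) = −1`. -/
theorem stmt17 (X : Type*) [Fintype X] [DecidableEq X] (n : ℕ)
    (hcard : Fintype.card X = n) (A B : Finset X) (hAB : Disjoint A B)
    (ρ : X ≃ Fin n) (r r' : Fin n) (hr : (r' : ℕ) = (r : ℕ) + 1)
    (hA : ρ.symm r ∈ A) (hB : ρ.symm r' ∈ B) :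
    (min (XInv ρ A B) (XInv ρ B A)
        = min (XInv (ρ.trans (Equiv.swap r r')) A B) (XInv (ρ.trans (Equiv.swap r r')) B A))
      ↔ (XInv ρ A B : ℤ) - (XInv ρ B A : ℤ) = -1 :=
  stmt17_general X n A B hAB ρ r r' hr hA hB
end

section
/- For all integers a ≥ 1, b ≥ 1 and every positive integer k, the number of (b+1)-tuples (m₁, …, m_{b+1}) of nonnegative integers with m₁ + ⋯ + m_{b+1} = a and m_i ≤ k for every i is at least (1 − (b+1)·exp(−b(k+1)/(a+b))) · C(a+b, b), where C(a+b, b) is the binomial coefficient. -/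
/-!
Among the `C(a+b, b)` weak compositions of `a` into `b + 1` parts, those with a given part
`≥ k + 1` are, after removing `k + 1` from that part, the weak compositions of `a - (k + 1)`,
of which there are `C(a + b - (k + 1), b)`. Each step `C(m, b) = C(m + 1, b) (1 - b/(m + 1))`
loses a factor `≤ exp (-b/(a + b))`, so this is at most `exp (-b(k + 1)/(a + b)) C(a + b, b)`,
and a union bound over the `b + 1` parts finishes the proof.
-/

open Finset Real

theorem Finset.card_le_card_filter_forall_add_sum {α ι : Type*} [Fintype ι] [DecidableEq α]
    (s : Finset α) (p : ι → α → Prop) [∀ i, DecidablePred (p i)] :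
    #s ≤ #{x ∈ s | ∀ i, p i x} + ∑ i, #{x ∈ s | ¬ p i x} := by
  calc #s ≤ #({x ∈ s | ∀ i, p i x} ∪ univ.biUnion fun i => {x ∈ s | ¬ p i x}) := by
        refine card_le_card fun x hx => ?_
        simp only [mem_union, mem_filter, mem_biUnion, mem_univ, true_and, hx, ← not_forall]
        exact em _
    _ ≤ #{x ∈ s | ∀ i, p i x} + #(univ.biUnion fun i => {x ∈ s | ¬ p i x}) := card_union_le _ _
    _ ≤ _ := by gcongr; exact card_biUnion_le

namespace Nat

theorem choose_le_exp_mul_choose_succ (m b : ℕ) :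
    (m.choose b : ℝ) ≤ exp (-(b / (m + 1))) * (m + 1).choose b := by
  rcases lt_or_ge (m + 1) b with hlt | hle
  · rw [choose_eq_zero_of_lt (by omega), Nat.cast_zero]
    positivity
  have hrec : (m.choose b : ℝ) = (m + 1).choose b * (1 - b / (m + 1)) := by
    have := congrArg (Nat.cast : ℕ → ℝ) (choose_mul_succ_eq m b)
    push_cast [Nat.cast_sub hle] at this
    field_simp
    linarith
  rw [hrec, mul_comm (exp _)]
  gcongr
  linarith [add_one_le_exp (-(b / (m + 1) : ℝ))]

theorem choose_sub_le_exp_mul_choose (b : ℕ) {n t : ℕ} (ht : t ≤ n) :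
    ((n - t).choose b : ℝ) ≤ exp (-(b * t) / n) * n.choose b := by
  induction t with
  | zero => simp
  | succ t ih =>
    obtain ⟨m, hm⟩ : ∃ m, n - t = m + 1 := ⟨n - (t + 1), by omega⟩
    have hmn : (m : ℝ) + 1 ≤ n := by exact_mod_cast (show m + 1 ≤ n by omega)
    calc ((n - (t + 1)).choose b : ℝ)
        = m.choose b := by rw [show n - (t + 1) = m by omega]
      _ ≤ exp (-(b / (m + 1))) * (m + 1).choose b := choose_le_exp_mul_choose_succ m b
      _ ≤ exp (-(b / n)) * (exp (-(b * t) / n) * n.choose b) := by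
          rw [← hm]
          gcongr
          exact ih (by omega)
      _ = exp (-(b * ↑(t + 1)) / n) * n.choose b := by
          rw [← mul_assoc, ← exp_add]
          push_cast
          ring_nf

end Nat

namespace Finset.Nat

theorem card_antidiagonalTuple (k n : ℕ) : #(antidiagonalTuple k n) = (k + n - 1).choose n := by
  rw [card_eq_of_equiv_fintype ((Equiv.subtypeEquivRight fun _ => mem_antidiagonalTuple).trans
    (Sym.equivNatSumOfFintype (Fin k) n).symm), Sym.card_sym_eq_choose, Fintype.card_fin]

theorem card_filter_le_apply_antidiagonalTuple {k n t : ℕ} (i : Fin k) (ht : t ≤ n) :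
    #{x ∈ antidiagonalTuple k n | t ≤ x i} = #(antidiagonalTuple k (n - t)) := by
  have sum_single : ∑ j, Pi.single i t j = t := by simp
  have single_le {x : Fin k → ℕ} (hx : t ≤ x i) : Pi.single i t ≤ x := by
    intro j
    rcases eq_or_ne j i with rfl | hj
    · simpa using hx
    · simp [hj]
  refine card_nbij' (· - Pi.single i t) (· + Pi.single i t) ?_ ?_ ?_ ?_
  · intro x hx
    simp only [coe_filter, mem_antidiagonalTuple, Set.mem_ofPred_eq, mem_coe] at hx ⊢
    have hsum := hx.1
    rw [← tsub_add_cancel_of_le (single_le hx.2)] at hsum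
    simp only [Pi.add_apply, sum_add_distrib, sum_single] at hsum
    omega
  · intro y hy
    simp only [coe_filter, mem_antidiagonalTuple, Set.mem_ofPred_eq, mem_coe] at hy ⊢
    simp only [Pi.add_apply, sum_add_distrib, hy, sum_single, Pi.single_eq_same]
    omega
  · intro x hx
    exact tsub_add_cancel_of_le (single_le (mem_filter.1 hx).2)
  · intro y _
    exact add_tsub_cancel_right y _

theorem card_filter_le_apply_antidiagonalTuple_le_exp_mul_choose (a b t : ℕ) (i : Fin (b + 1)) :
    (#{x ∈ antidiagonalTuple (b + 1) a | t ≤ x i} : ℝ)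
      ≤ exp (-(b * t) / (a + b)) * (a + b).choose b := by
  rcases le_or_gt t a with hta | hat
  · rw [card_filter_le_apply_antidiagonalTuple i hta, card_antidiagonalTuple,
      show b + 1 + (a - t) - 1 = a - t + b by omega, Nat.choose_symm_add,
      show a - t + b = a + b - t by omega]
    exact_mod_cast Nat.choose_sub_le_exp_mul_choose b (n := a + b) (by omega)
  · rw [filter_false_of_mem fun x hx => ?_, card_empty, Nat.cast_zero]
    · positivity
    · have := single_le_sum (fun j _ => Nat.zero_le (x j)) (mem_univ i)
      rw [mem_antidiagonalTuple.1 hx] at this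
      omega

end Finset.Nat

theorem stmt18_general (a b k : ℕ) :
    (1 - ((b : ℝ) + 1) * Real.exp (-((b : ℝ) * ((k : ℝ) + 1)) / ((a : ℝ) + (b : ℝ)))) *
        (((a + b).choose b : ℕ) : ℝ)
      ≤ (((Fintype.piFinset (fun _ : Fin (b + 1) => Finset.Iic k)).filter
          (fun m : Fin (b + 1) → ℕ => ∑ i, m i = a)).card : ℝ) := by
  set T := Nat.antidiagonalTuple (b + 1) a
  have hgood : (Fintype.piFinset fun _ : Fin (b + 1) => Iic k).filter (fun m => ∑ i, m i = a)
      = {x ∈ T | ∀ i, x i ≤ k} := by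
    ext x
    simp [T, Nat.mem_antidiagonalTuple, and_comm]
  have hT : #T = (a + b).choose b := by
    rw [Nat.card_antidiagonalTuple, show b + 1 + a - 1 = a + b by omega, Nat.choose_symm_add]
  have hunion := card_le_card_filter_forall_add_sum T fun i x => x i ≤ k
  have hbad (i : Fin (b + 1)) : (#{x ∈ T | ¬ x i ≤ k} : ℝ)
      ≤ exp (-(b * (k + 1)) / (a + b)) * (a + b).choose b := by
    simp only [not_le, ← Nat.add_one_le_iff]
    exact_mod_cast Nat.card_filter_le_apply_antidiagonalTuple_le_exp_mul_choose a b (k + 1) i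
  rw [hgood]
  calc (1 - (b + 1) * exp (-(b * (k + 1)) / (a + b))) * ((a + b).choose b : ℝ)
      = (a + b).choose b
          - ∑ _i : Fin (b + 1), exp (-(b * (k + 1)) / (a + b)) * (a + b).choose b := by
        simp only [sum_const, card_univ, Fintype.card_fin, nsmul_eq_mul]
        push_cast
        ring
    _ ≤ (a + b).choose b - ∑ i, (#{x ∈ T | ¬ x i ≤ k} : ℝ) := by gcongr with i; exact hbad i
    _ ≤ #{x ∈ T | ∀ i, x i ≤ k} := by
        rw [sub_le_iff_le_add, ← hT]
        norm_cast
        convert hunion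

/-- For all integers `a, b ≥ 1` and every positive integer `k`, the number of `(b+1)`-tuples
`(m₁, …, m_{b+1})` of nonnegative integers with `m₁ + ⋯ + m_{b+1} = a` and `mᵢ ≤ k` for every
`i` is at least `(1 − (b+1)·exp(−b(k+1)/(a+b))) · C(a+b, b)`. -/
theorem stmt18 (a b k : ℕ) (ha : 1 ≤ a) (hb : 1 ≤ b) (hk : 1 ≤ k) :
    (1 - ((b : ℝ) + 1) * Real.exp (-((b : ℝ) * ((k : ℝ) + 1)) / ((a : ℝ) + (b : ℝ)))) *
        (((a + b).choose b : ℕ) : ℝ)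
      ≤ (((Fintype.piFinset (fun _ : Fin (b + 1) => Finset.Iic k)).filter
          (fun m : Fin (b + 1) → ℕ => ∑ i, m i = a)).card : ℝ) :=
  stmt18_general a b k
end

section
/- Let X be a finite set of size n partitioned into classes X₁, …, X_m, each of size at most k, where k ≥ 1. Consider the graph whose vertices are the bijections ρ : X → {1, …, n} and whose edges join ρ to the ranking obtained from ρ by composing with the transposition of values r and r+1, for each r ∈ {1, …, n−1} such that ρ⁻¹(r) and ρ⁻¹(r+1) lie in the same partition class. Then this graph has at least n!/(2·(k!)²) connected components. -/
/-!
Along an edge the sequence of classes read in rank order, `r ↦ c (ρ⁻¹ r)`, does not change, and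
the two swapped ranks lie in the same maximal run of equal classes of that sequence. Hence every
ranking reachable from `ρ₀` puts each element into the same run as `ρ₀` does, and the component of
`ρ₀` has at most `∏ bᵢ!` elements, where `bᵢ ≤ k` are the run lengths. If `ρ₀` has at most
`2 (k - 1)` ties (adjacent ranks in the same class), then `∑ (bᵢ - 1) ≤ 2 (k - 1)`, and
log-convexity of the factorial gives `∏ bᵢ! ≤ (k!)²`.

For a uniformly random ranking, two given ranks hold elements of the same class with probability
at most `(k - 1) / (n - 1)`, so the expected number of ties is at most `k - 1`. By Markov's
inequality at least `n! / 2` rankings have at most `2 (k - 1)` ties, and they are spread over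
components of at most `(k!)²` rankings each.
-/

open Finset
open scoped Nat

theorem factorial_le_pow_pred : ∀ n : ℕ, n ! ≤ n ^ (n - 1)
  | 0 => le_rfl
  | n + 1 => by
    calc (n + 1)! = (n + 1) * n ! := Nat.factorial_succ n
      _ ≤ (n + 1) * n ^ (n - 1) := Nat.mul_le_mul_left _ (factorial_le_pow_pred n)
      _ ≤ (n + 1) * (n + 1) ^ (n - 1) := by gcongr; omega
      _ ≤ (n + 1) ^ n := by
        rcases n with _ | n
        · simp
        · rw [← pow_succ']; rfl

theorem factorial_pow_le_factorial_pow {b k : ℕ} (hbk : b ≤ k) :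
    b ! ^ (k - 1) ≤ k ! ^ (b - 1) := by
  rcases b.eq_zero_or_pos with rfl | hb
  · simp
  calc b ! ^ (k - 1) = b ! ^ (b - 1) * b ! ^ (k - b) := by rw [← pow_add]; congr 1; omega
    _ ≤ b ! ^ (b - 1) * (b ^ (b - 1)) ^ (k - b) := by gcongr; exact factorial_le_pow_pred b
    _ = (b ! * b ^ (k - b)) ^ (b - 1) := by rw [mul_pow, ← pow_mul, ← pow_mul, mul_comm (b - 1)]
    _ ≤ k ! ^ (b - 1) := by gcongr; exact Nat.factorial_mul_pow_sub_le_factorial hbk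

theorem prod_factorial_le_factorial_sq {α : Type*} (s : Finset α) (b : α → ℕ) {k : ℕ}
    (hb : ∀ i ∈ s, b i ≤ k) (hsum : ∑ i ∈ s, (b i - 1) ≤ 2 * (k - 1)) :
    ∏ i ∈ s, (b i)! ≤ k ! ^ 2 := by
  rcases le_or_gt k 1 with hk | hk
  · rw [prod_eq_one fun i hi => by rw [Nat.factorial_eq_one]; exact (hb i hi).trans hk]
    exact Nat.one_le_pow _ _ (Nat.factorial_pos k)
  rw [← Nat.pow_le_pow_iff_left (show k - 1 ≠ 0 by omega), ← prod_pow]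
  calc ∏ i ∈ s, (b i)! ^ (k - 1) ≤ ∏ i ∈ s, k ! ^ (b i - 1) :=
        prod_le_prod' fun i hi => factorial_pow_le_factorial_pow (hb i hi)
    _ = k ! ^ ∑ i ∈ s, (b i - 1) := prod_pow_eq_pow_sum _ _ _
    _ ≤ k ! ^ (2 * (k - 1)) := Nat.pow_le_pow_right (Nat.factorial_pos k) hsum
    _ = (k ! ^ 2) ^ (k - 1) := by rw [← pow_mul]

theorem card_le_two_mul_card_filter_le {α : Type*} [Fintype α] (f : α → ℕ) (a : ℕ)
    (h : ∑ x, f x ≤ a * Fintype.card α) : Fintype.card α ≤ 2 * #{x | f x ≤ 2 * a} := by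
  classical
  have hsplit := card_filter_add_card_filter_not (s := (univ : Finset α)) (fun x => f x ≤ 2 * a)
  have hbad : #{x | ¬f x ≤ 2 * a} * (2 * a + 1) ≤ a * Fintype.card α := by
    calc #{x | ¬f x ≤ 2 * a} * (2 * a + 1) ≤ ∑ x ∈ {x | ¬f x ≤ 2 * a}, f x := by
          rw [← smul_eq_mul]
          exact card_nsmul_le_sum _ _ _ fun x hx => by simp only [mem_filter] at hx; omega
      _ ≤ ∑ x, f x := sum_le_sum_of_subset (filter_subset _ _)
      _ ≤ a * Fintype.card α := h
  rw [card_univ] at hsplit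
  nlinarith

theorem Function.comp_swap_of_eq {α β : Type*} [DecidableEq α] {f : α → β} {i j : α}
    (h : f i = f j) : f ∘ Equiv.swap i j = f := by
  funext x
  rcases eq_or_ne x i with rfl | hi
  · simp [h]
  rcases eq_or_ne x j with rfl | hj
  · simp [h]
  · simp [Equiv.swap_apply_of_ne_of_ne hi hj]

theorem Equiv.card_comp_eq_comp {X Y β : Type*} [Fintype X] [Fintype Y] [DecidableEq X]
    [DecidableEq Y] [DecidableEq β] (g : Y → β) (ρ₀ : X ≃ Y) :
    Fintype.card {ρ : X ≃ Y // g ∘ ρ = g ∘ ρ₀} =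
      ∏ i ∈ univ.image g, (Fintype.card {a // g a = i})! := by
  rw [← DomMulAct.stabilizer_card']
  refine Fintype.card_congr (Equiv.subtypeEquiv (ρ₀.equivCongr (Equiv.refl Y)) fun ρ => ?_)
  change g ∘ ρ = g ∘ ρ₀ ↔ (g ∘ ρ) ∘ ρ₀.symm = g
  exact (ρ₀.comp_symm_eq _ _).symm

theorem Fintype.card_subtype_ne_and_ne {α : Type*} [Fintype α] [DecidableEq α] {a b : α}
    (hab : a ≠ b) : Fintype.card {z // z ≠ a ∧ z ≠ b} = Fintype.card α - 2 := by
  rw [Fintype.card_subtype, ← card_univ, ← card_pair hab, ← card_sdiff_of_subset (subset_univ _)]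
  congr 1; ext; simp

theorem Equiv.card_symm_apply_eq_le {X Y : Type*} [Fintype X] [Fintype Y] [DecidableEq X]
    [DecidableEq Y] {x y : X} {r r' : Y} (hxy : x ≠ y) (hr : r ≠ r') :
    #{ρ : X ≃ Y | ρ.symm r = x ∧ ρ.symm r' = y} ≤ (Fintype.card X - 2)! := by
  set S : Finset (X ≃ Y) := {ρ | ρ.symm r = x ∧ ρ.symm r' = y}
  rcases S.eq_empty_or_nonempty with hS | ⟨ρ₁, -⟩
  · simp [hS]
  have hval : ∀ ρ : S, ρ.1 x = r ∧ ρ.1 y = r' := fun ρ => by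
    have := ρ.2
    simp only [S, mem_filter, mem_univ, true_and, Equiv.symm_apply_eq] at this
    exact ⟨this.1.symm, this.2.symm⟩
  let restrict (ρ : S) : {z // z ≠ x ∧ z ≠ y} ↪ {t // t ≠ r ∧ t ≠ r'} :=
    (ρ.1.subtypeEquiv fun z => by simp [← (hval ρ).1, ← (hval ρ).2]).toEmbedding
  have hinj : Function.Injective restrict := by
    intro ρ₁ ρ₂ h
    refine Subtype.ext (Equiv.ext fun z => ?_)
    by_cases hz : z ≠ x ∧ z ≠ y
    · exact congrArg Subtype.val (DFunLike.congr_fun h ⟨z, hz⟩)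
    · rcases not_and_or.mp hz with hz | hz <;> obtain rfl := not_not.mp hz
      · rw [(hval ρ₁).1, (hval ρ₂).1]
      · rw [(hval ρ₁).2, (hval ρ₂).2]
  calc #S = Fintype.card S := (Fintype.card_coe S).symm
    _ ≤ Fintype.card ({z // z ≠ x ∧ z ≠ y} ↪ {t // t ≠ r ∧ t ≠ r'}) :=
        Fintype.card_le_of_injective restrict hinj
    _ = (Fintype.card X - 2)! := by
        rw [Fintype.card_embedding_eq, Fintype.card_subtype_ne_and_ne hxy,
          Fintype.card_subtype_ne_and_ne hr, Fintype.card_congr ρ₁, Nat.descFactorial_self]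

theorem card_pairs_same_fiber_le {X ι : Type*} [Fintype X] [DecidableEq X] [DecidableEq ι]
    {c : X → ι} {k : ℕ} (hsize : ∀ j, #{x | c x = j} ≤ k) :
    #{p : X × X | p.1 ≠ p.2 ∧ c p.1 = c p.2} ≤ Fintype.card X * (k - 1) := by
  rw [card_filter, Fintype.sum_prod_type, ← smul_eq_mul, ← card_univ, ← sum_const]
  refine sum_le_sum fun x _ => ?_
  rw [← card_filter]
  have hx : x ∈ ({y | c y = c x} : Finset X) := by simp
  calc #{y | x ≠ y ∧ c x = c y} = #(({y | c y = c x} : Finset X).erase x) := by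
        congr 1; ext y; simp [eq_comm]
    _ ≤ k - 1 := by rw [card_erase_of_mem hx]; exact Nat.sub_le_sub_right (hsize _) 1

theorem Equiv.card_symm_apply_same_fiber_le {X Y ι : Type*} [Fintype X] [Fintype Y]
    [DecidableEq X] [DecidableEq Y] [DecidableEq ι] {c : X → ι} {k : ℕ}
    (hsize : ∀ j, #{x | c x = j} ≤ k) {r r' : Y} (hr : r ≠ r') :
    #{ρ : X ≃ Y | c (ρ.symm r) = c (ρ.symm r')} ≤
      Fintype.card X * (k - 1) * (Fintype.card X - 2)! := by
  set P : Finset (X × X) := {p | p.1 ≠ p.2 ∧ c p.1 = c p.2}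
  rw [card_eq_sum_card_fiberwise (f := fun ρ : X ≃ Y => (ρ.symm r, ρ.symm r')) (t := P)
    fun ρ hρ => by simpa [P, hr] using hρ]
  calc ∑ p ∈ P, #{ρ ∈ ({ρ | c (ρ.symm r) = c (ρ.symm r')} : Finset (X ≃ Y)) |
          (ρ.symm r, ρ.symm r') = p}
      ≤ ∑ p ∈ P, (Fintype.card X - 2)! := sum_le_sum fun p hp => by
        refine (card_le_card fun ρ hρ => ?_).trans
          (Equiv.card_symm_apply_eq_le (mem_filter.mp hp).2.1 hr)
        simp only [mem_filter, mem_univ, true_and, Prod.ext_iff] at hρ ⊢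
        exact hρ.2
    _ ≤ Fintype.card X * (k - 1) * (Fintype.card X - 2)! := by
        rw [sum_const, smul_eq_mul]
        exact Nat.mul_le_mul_right _ (card_pairs_same_fiber_le hsize)

theorem SimpleGraph.Reachable.eq_of_fromRel {V β : Type*} {r : V → V → Prop} {F : V → β}
    (hF : ∀ a b, r a b → F b = F a) {a b : V} (h : (SimpleGraph.fromRel r).Reachable a b) :
    F b = F a := by
  rw [SimpleGraph.reachable_iff_reflTransGen] at h
  induction h with
  | refl => rfl
  | tail _ hadj ih =>
    rw [SimpleGraph.fromRel_adj] at hadj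
    rcases hadj.2 with h | h
    · rw [hF _ _ h, ih]
    · rw [← hF _ _ h, ih]

theorem SimpleGraph.card_le_mul_card_connectedComponent {V : Type*} [Fintype V]
    (G : SimpleGraph V) (s : Finset V) (K : ℕ)
    (h : ∀ v ∈ s, Nat.card {w // G.Reachable v w} ≤ K) :
    #s ≤ K * Nat.card G.ConnectedComponent := by
  classical
  refine (card_le_mul_card_image (f := G.connectedComponentMk) s K fun C hC => ?_).trans ?_
  · obtain ⟨v, hv, rfl⟩ := mem_image.mp hC
    have hK := h v hv
    rw [Nat.card_eq_fintype_card, Fintype.card_subtype] at hK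
    refine (card_le_card fun w hw => ?_).trans hK
    simp only [mem_filter, mem_univ, true_and] at hw ⊢
    exact SimpleGraph.ConnectedComponent.exact hw.2.symm
  · rw [Nat.card_eq_fintype_card]
    exact Nat.mul_le_mul_left _ (card_le_univ _)

namespace Ranking

section Runs

variable {ι : Type*} [DecidableEq ι] {m : ℕ} (L : Fin (m + 1) → ι)

def ties : Finset (Fin m) := {i | L i.castSucc = L i.succ}

/-- Its fibres are the maximal runs of equal labels. -/
def runIndex (r : Fin (m + 1)) : ℕ := #{i : Fin m | i.succ ≤ r ∧ L i.castSucc ≠ L i.succ}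

variable {L}

theorem runIndex_mono : Monotone (runIndex L) := fun _ _ hrs =>
  card_le_card <| monotone_filter_right _ fun _ _ => And.imp_left (le_trans · hrs)

theorem runIndex_succ_of_mem_ties {i : Fin m} (hi : i ∈ ties L) :
    runIndex L i.succ = runIndex L i.castSucc := by
  simp only [ties, mem_filter, mem_univ, true_and] at hi
  unfold runIndex
  congr 1
  ext j
  simp only [mem_filter, mem_univ, true_and, Fin.succ_le_succ_iff, Fin.succ_le_castSucc_iff]
  constructor
  · rintro ⟨hji, hj⟩
    exact ⟨lt_of_le_of_ne hji (by rintro rfl; exact hj hi), hj⟩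
  · rintro ⟨hji, hj⟩
    exact ⟨hji.le, hj⟩

theorem runIndex_castSucc_lt {i : Fin m} (hi : i ∉ ties L) {r : Fin (m + 1)}
    (hr : i.castSucc < r) : runIndex L i.castSucc < runIndex L r := by
  simp only [ties, mem_filter, mem_univ, true_and] at hi
  refine card_lt_card ⟨monotone_filter_right _ fun _ _ => And.imp_left (le_trans · hr.le), ?_⟩
  rw [not_subset]
  exact ⟨i, by simpa [Fin.succ_le_castSucc_iff, Fin.castSucc_lt_iff_succ_le] using ⟨hr, hi⟩⟩

theorem label_eq_of_runIndex_eq {r s : Fin (m + 1)} (h : runIndex L r = runIndex L s) :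
    L r = L s := by
  wlog hrs : r ≤ s generalizing r s
  · exact (this h.symm (le_of_not_ge hrs)).symm
  induction s using Fin.induction with
  | zero => rw [Fin.le_zero_iff.mp hrs]
  | succ i ih =>
    rcases hrs.eq_or_lt with rfl | hlt
    · rfl
    have hri : r ≤ i.castSucc := Fin.le_castSucc_iff.mpr hlt
    have hmid : runIndex L r = runIndex L i.castSucc :=
      le_antisymm (runIndex_mono hri) (h ▸ runIndex_mono (Fin.castSucc_le_succ i))
    have htie : i ∈ ties L := by
      by_contra hi
      exact (runIndex_castSucc_lt hi i.castSucc_lt_succ).ne (hmid.symm.trans h)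
    rw [ih hmid hri]
    simpa [ties] using htie

theorem card_sub_card_ties_le_card_image_runIndex :
    m + 1 - #(ties L) ≤ #(univ.image (runIndex L)) := by
  let ends : Finset (Fin (m + 1)) := univ \ (ties L).map Fin.castSuccEmb
  have hmono : StrictMonoOn (runIndex L) ends := by
    intro r hr s _ hrs
    obtain ⟨i, rfl⟩ := Fin.exists_castSucc_eq.mpr (Fin.ne_last_of_lt hrs)
    have hi : i ∉ ties L := by simpa [ends] using hr
    exact runIndex_castSucc_lt hi hrs
  calc m + 1 - #(ties L) = #ends := by simp [ends, card_sdiff]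
    _ = #(ends.image (runIndex L)) := (card_image_of_injOn hmono.injOn).symm
    _ ≤ #(univ.image (runIndex L)) := card_le_card (image_subset_image (subset_univ _))

theorem sum_card_fiber_runIndex_sub_one_le :
    ∑ i ∈ univ.image (runIndex L), (Fintype.card {a // runIndex L a = i} - 1) ≤ #(ties L) := by
  have hfib : ∀ i ∈ univ.image (runIndex L), 1 ≤ Fintype.card {a // runIndex L a = i} := by
    intro i hi
    obtain ⟨a, -, rfl⟩ := mem_image.mp hi
    exact Fintype.card_pos_iff.mpr ⟨⟨a, rfl⟩⟩
  have htotal : ∑ i ∈ univ.image (runIndex L), Fintype.card {a // runIndex L a = i} = m + 1 := by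
    simp only [Fintype.card_subtype]
    rw [← card_eq_sum_card_image, card_univ, Fintype.card_fin]
  rw [sum_tsub_distrib _ hfib, htotal, sum_const, smul_eq_mul, mul_one]
  have := card_sub_card_ties_le_card_image_runIndex (L := L)
  omega

end Runs

section Graph

variable {X ι : Type*} {n : ℕ}

def SwapStep (c : X → ι) (ρ ρ' : X ≃ Fin n) : Prop :=
  ∃ r r' : Fin n, (r' : ℕ) = (r : ℕ) + 1 ∧ c (ρ.symm r) = c (ρ.symm r') ∧
    ρ' = ρ.trans (Equiv.swap r r')

def rankGraph (c : X → ι) : SimpleGraph (X ≃ Fin n) := SimpleGraph.fromRel (SwapStep c)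

def labels (c : X → ι) (ρ : X ≃ Fin n) : Fin n → ι := c ∘ ρ.symm

theorem labels_eq_of_swapStep {c : X → ι} {ρ ρ' : X ≃ Fin n} (h : SwapStep c ρ ρ') :
    labels c ρ' = labels c ρ := by
  obtain ⟨r, r', -, hc, rfl⟩ := h
  exact Function.comp_swap_of_eq (f := labels c ρ) hc

theorem labels_eq_of_reachable {c : X → ι} {ρ₀ ρ : X ≃ Fin n}
    (h : (rankGraph c).Reachable ρ₀ ρ) : labels c ρ = labels c ρ₀ :=
  h.eq_of_fromRel fun _ _ => labels_eq_of_swapStep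

variable [DecidableEq ι] {m : ℕ}

theorem runIndex_comp_eq_of_swapStep {c : X → ι} {ρ ρ' : X ≃ Fin (m + 1)}
    (h : SwapStep c ρ ρ') : runIndex (labels c ρ') ∘ ρ' = runIndex (labels c ρ) ∘ ρ := by
  rw [labels_eq_of_swapStep h]
  obtain ⟨r, r', hr', hc, rfl⟩ := h
  obtain ⟨i, rfl⟩ :=
    Fin.exists_castSucc_eq.mpr (Fin.ne_last_of_lt (Fin.lt_def.mpr (by omega) : r < r'))
  obtain rfl : r' = i.succ := Fin.ext (by simpa using hr')
  have hi : i ∈ ties (labels c ρ) := mem_filter.mpr ⟨mem_univ _, hc⟩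
  rw [Equiv.coe_trans, ← Function.comp_assoc, Function.comp_swap_of_eq
    (runIndex_succ_of_mem_ties hi).symm]

theorem runIndex_comp_eq_of_reachable {c : X → ι} {ρ₀ ρ : X ≃ Fin (m + 1)}
    (h : (rankGraph c).Reachable ρ₀ ρ) :
    runIndex (labels c ρ₀) ∘ ρ = runIndex (labels c ρ₀) ∘ ρ₀ := by
  have := h.eq_of_fromRel fun _ _ => runIndex_comp_eq_of_swapStep
  rwa [labels_eq_of_reachable h] at this

variable [Fintype X] {c : X → ι} {k : ℕ}

theorem card_fiber_runIndex_le (hsize : ∀ j, #{x | c x = j} ≤ k) (ρ₀ : X ≃ Fin (m + 1))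
    (a₀ : Fin (m + 1)) :
    Fintype.card {a // runIndex (labels c ρ₀) a = runIndex (labels c ρ₀) a₀} ≤ k := by
  calc Fintype.card {a // runIndex (labels c ρ₀) a = runIndex (labels c ρ₀) a₀}
      ≤ Fintype.card {x // c x = c (ρ₀.symm a₀)} :=
        Fintype.card_le_of_injective (fun a => ⟨ρ₀.symm a, label_eq_of_runIndex_eq a.2⟩)
          fun a b hab => Subtype.ext (ρ₀.symm.injective (congrArg Subtype.val hab))
    _ ≤ k := by rw [Fintype.card_subtype]; exact hsize _

theorem card_reachable_le_factorial_sq (hsize : ∀ j, #{x | c x = j} ≤ k)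
    (ρ₀ : X ≃ Fin (m + 1)) (hties : #(ties (labels c ρ₀)) ≤ 2 * (k - 1)) :
    Nat.card {ρ // (rankGraph c).Reachable ρ₀ ρ} ≤ k ! ^ 2 := by
  classical
  set g := runIndex (labels c ρ₀)
  calc Nat.card {ρ // (rankGraph c).Reachable ρ₀ ρ}
      ≤ Nat.card {ρ : X ≃ Fin (m + 1) // g ∘ ρ = g ∘ ρ₀} :=
        Nat.card_mono (Set.toFinite _) fun _ => runIndex_comp_eq_of_reachable
    _ = ∏ i ∈ univ.image g, (Fintype.card {a // g a = i})! := by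
        rw [Nat.card_eq_fintype_card, Equiv.card_comp_eq_comp]
    _ ≤ k ! ^ 2 := by
        refine prod_factorial_le_factorial_sq _ _ (fun i hi => ?_)
          (sum_card_fiber_runIndex_sub_one_le.trans hties)
        obtain ⟨a₀, -, rfl⟩ := mem_image.mp hi
        exact card_fiber_runIndex_le hsize ρ₀ a₀

variable [DecidableEq X]

theorem sum_card_ties_le (hcard : Fintype.card X = m + 1) (hsize : ∀ j, #{x | c x = j} ≤ k) :
    ∑ ρ : X ≃ Fin (m + 1), #(ties (labels c ρ)) ≤ (k - 1) * (m + 1)! := by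
  calc ∑ ρ : X ≃ Fin (m + 1), #(ties (labels c ρ))
      = ∑ i : Fin m, #{ρ : X ≃ Fin (m + 1) | c (ρ.symm i.castSucc) = c (ρ.symm i.succ)} := by
        simp only [ties, card_filter]
        exact sum_comm
    _ ≤ ∑ _i : Fin m, (m + 1) * (k - 1) * (m + 1 - 2)! := sum_le_sum fun i _ => by
        simpa only [hcard] using Equiv.card_symm_apply_same_fiber_le hsize i.castSucc_lt_succ.ne
    _ ≤ (k - 1) * (m + 1)! := by
        rw [sum_const, card_univ, Fintype.card_fin, smul_eq_mul]
        rcases m with _ | m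
        · simp
        · rw [show m + 1 + 1 - 2 = m by omega, Nat.factorial_succ, Nat.factorial_succ]
          exact le_of_eq (by ring)

theorem factorial_le_two_mul_factorial_sq_mul_card_connectedComponent
    (hcard : Fintype.card X = n) (hsize : ∀ j, #{x | c x = j} ≤ k) :
    n ! ≤ 2 * (k ! ^ 2 * Nat.card (rankGraph (n := n) c).ConnectedComponent) := by
  have hrankings : Fintype.card (X ≃ Fin n) = n ! := by
    rw [Fintype.card_equiv (Fintype.equivFinOfCardEq hcard), hcard]
  obtain _ | m := n
  · have : Nonempty (rankGraph (n := 0) c).ConnectedComponent :=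
      ⟨(rankGraph c).connectedComponentMk (Fintype.equivFinOfCardEq hcard)⟩
    have := Nat.card_pos (α := (rankGraph (n := 0) c).ConnectedComponent)
    have := Nat.factorial_pos k
    rw [Nat.factorial_zero]
    nlinarith
  set good : Finset (X ≃ Fin (m + 1)) := {ρ | #(ties (labels c ρ)) ≤ 2 * (k - 1)}
  have hgood : (m + 1)! ≤ 2 * #good := by
    rw [← hrankings]
    exact card_le_two_mul_card_filter_le _ _ (hrankings ▸ sum_card_ties_le hcard hsize)
  have hcomp : #good ≤ k ! ^ 2 * Nat.card (rankGraph c).ConnectedComponent :=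
    (rankGraph c).card_le_mul_card_connectedComponent good _ fun ρ hρ =>
      card_reachable_le_factorial_sq hsize ρ (mem_filter.mp hρ).2
  omega

end Graph

end Ranking

open Ranking in
theorem stmt19_general (X : Type*) [Fintype X] (n : ℕ)
    (hcard : Fintype.card X = n) (ι : Type*) (c : X → ι) (k : ℕ)
    (hsize : ∀ j : ι, Set.ncard {x : X | c x = j} ≤ k) :
    (n.factorial : ℝ) / (2 * (k.factorial : ℝ) ^ 2)
      ≤ Nat.card
          (SimpleGraph.fromRel (fun ρ ρ' : X ≃ Fin n =>
            ∃ r r' : Fin n, (r' : ℕ) = (r : ℕ) + 1 ∧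
              c (ρ.symm r) = c (ρ.symm r') ∧
              ρ' = ρ.trans (Equiv.swap r r'))).ConnectedComponent := by
  classical
  have hfibre : ∀ j, #{x | c x = j} ≤ k := fun j => by
    simpa [Set.ncard_eq_toFinset_card'] using hsize j
  have key := factorial_le_two_mul_factorial_sq_mul_card_connectedComponent hcard hfibre
  rw [div_le_iff₀ (by positivity)]
  change _ ≤ (Nat.card (rankGraph (n := n) c).ConnectedComponent : ℝ) * _
  exact_mod_cast key.trans_eq (by ring)

/-- **Lower bound for problems with the partition property.** Let `X` be a finite set of size
`n` partitioned into classes (the fibers of `c : X → ι`), each of size at most `k ≥ 1`.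
Consider the graph whose vertices are the rankings `ρ : X ≃ Fin n` and whose edges join `ρ`
to the ranking obtained from `ρ` by composing with the transposition of two consecutive
values `r` and `r' = r+1` such that `ρ⁻¹(r)` and `ρ⁻¹(r')` lie in the same partition class.
Then this graph has at least `n!/(2·(k!)²)` connected components. -/
theorem stmt19 (X : Type*) [Fintype X] [DecidableEq X] (n : ℕ)
    (hcard : Fintype.card X = n) (ι : Type*) (c : X → ι) (k : ℕ) (hk : 1 ≤ k)
    (hsize : ∀ j : ι, Set.ncard {x : X | c x = j} ≤ k) :
    (n.factorial : ℝ) / (2 * (k.factorial : ℝ) ^ 2)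
      ≤ Nat.card
          (SimpleGraph.fromRel (fun ρ ρ' : X ≃ Fin n =>
            ∃ r r' : Fin n, (r' : ℕ) = (r : ℕ) + 1 ∧
              c (ρ.symm r) = c (ρ.symm r') ∧
              ρ' = ρ.trans (Equiv.swap r r'))).ConnectedComponent :=
  stmt19_general X n hcard ι c k hsize
end
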